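/- arXiv:2107.06905 — 3 statements merged into one kernel-verified Lean document; each statement's English description precedes it below -/
import Mathlib

section
/- (Soundness of the Bubble-Hybrid transition system) For every sentence W = w_1, …, w_n, every valid transition sequence for W produces a projective well-formed bubble tree on W. -/
/-- Ground node set `V`: `none` is the dummy root `RT`,
`some i` represents the word `w_{i+1}` (0-indexed internally). -/
abbrev BNode (n : ℕ) := Option (Fin n)

/-- A parser configuration `(σ, β, B, φ, A, O)`.
The stack's top is the head of `stack`; the buffer's front is the head of `buffer`. -/
structure Config (n : ℕ) (L : Type*) where
  stack : List ℕ
  buffer : List ℕ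
  bubbles : Finset ℕ
  content : ℕ → Set (BNode n)
  arcs : Set (ℕ × L × ℕ)
  openB : Finset ℕ

/-- `α1 → α2`: there is an arc from `α1` to `α2` with some label. -/
def ArcRel {L : Type*} (arcs : Set (ℕ × L × ℕ)) (a b : ℕ) : Prop :=
  ∃ l, (a, l, b) ∈ arcs

/-- Projection `ψ(α)`: union of the contents of all bubbles reachable from `α`
(reflexive-transitive closure of the arc relation). -/
def projOf {n : ℕ} {L : Type*} (arcs : Set (ℕ × L × ℕ)) (φ : ℕ → Set (BNode n))
    (α : ℕ) : Set (BNode n) :=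
  {v | ∃ α', Relation.ReflTransGen (ArcRel arcs) α α' ∧ v ∈ φ α'}

/-- `ψ` of a configuration. -/
def Config.proj {n : ℕ} {L : Type*} (c : Config n L) (α : ℕ) : Set (BNode n) :=
  projOf c.arcs c.content α

/-- Initial configuration `c^i(W)`: bubble `0` is the singleton `{RT}`,
bubble `i` (for `1 ≤ i ≤ n`) is the singleton `{w_i}`. -/
def initConfig (n : ℕ) (L : Type*) : Config n L where
  stack := [0]
  buffer := (List.range n).map (· + 1)
  bubbles := Finset.range (n + 1)
  content := fun i =>
    {v | (i = 0 ∧ v = none) ∨ ∃ k : Fin n, i = (k : ℕ) + 1 ∧ v = some k}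
  arcs := ∅
  openB := ∅

/-- Terminal configuration: empty buffer, and the stack is the single bubble
with content `{RT}`. -/
def Terminal {n : ℕ} {L : Type*} (c : Config n L) : Prop :=
  c.buffer = [] ∧ ∃ r, c.stack = [r] ∧ c.content r = {(none : BNode n)}

/-- The Bubble-Hybrid transitions. -/
inductive Step {n : ℕ} {L : Type*} (conj : L) : Config n L → Config n L → Prop
  | shift (c : Config n L) (b1 : ℕ) (β : List ℕ)
      (hbuf : c.buffer = b1 :: β) :
      Step conj c { c with stack := b1 :: c.stack, buffer := β }
  | leftArc (c : Config n L) (lbl : L) (s1 : ℕ) (σ : List ℕ) (b1 : ℕ) (β : List ℕ)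
      (hstk : c.stack = s1 :: σ) (hbuf : c.buffer = b1 :: β)
      (hs1 : s1 ∉ c.openB) (hb1 : b1 ∉ c.openB)
      (hroot : c.content s1 ≠ {(none : BNode n)}) :
      Step conj c { c with stack := σ, arcs := insert (b1, lbl, s1) c.arcs }
  | rightArc (c : Config n L) (lbl : L) (s1 s2 : ℕ) (σ : List ℕ)
      (hstk : c.stack = s1 :: s2 :: σ)
      (hs1 : s1 ∉ c.openB) (hs2 : s2 ∉ c.openB) :
      Step conj c { c with stack := s2 :: σ, arcs := insert (s2, lbl, s1) c.arcs }
  | bubbleOpen (c : Config n L) (lbl : L) (s1 s2 : ℕ) (σ : List ℕ) (α : ℕ)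
      (hstk : c.stack = s1 :: s2 :: σ)
      (hs1 : s1 ∉ c.openB) (hs2 : s2 ∉ c.openB)
      (hroot : c.content s2 ≠ {(none : BNode n)})
      (hfresh : α ∉ c.bubbles) :
      Step conj c
        { stack := α :: σ
          buffer := c.buffer
          bubbles := insert α c.bubbles
          content := Function.update c.content α (c.proj s2 ∪ c.proj s1)
          arcs := insert (α, conj, s2) (insert (α, lbl, s1) c.arcs)
          openB := insert α c.openB }
  | bubbleAttach (c : Config n L) (lbl : L) (s1 s2 : ℕ) (σ : List ℕ)
      (hstk : c.stack = s1 :: s2 :: σ)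
      (hs1 : s1 ∉ c.openB) (hs2 : s2 ∈ c.openB) :
      Step conj c
        { c with
          stack := s2 :: σ
          content := Function.update c.content s2 (c.content s2 ∪ c.proj s1)
          arcs := insert (s2, lbl, s1) c.arcs }
  | bubbleClose (c : Config n L) (s1 : ℕ) (σ : List ℕ)
      (hstk : c.stack = s1 :: σ) (hs1 : s1 ∈ c.openB) :
      Step conj c
        { c with stack := σ, buffer := s1 :: c.buffer, openB := c.openB.erase s1 }

/-- A configuration is reachable if it is obtained from the initial configuration
by a finite sequence of transitions. -/
def Reachable {n : ℕ} {L : Type*} (conj : L) (c : Config n L) : Prop :=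
  Relation.ReflTransGen (Step conj) (initConfig n L) c

/-- `arcs` forms a directed tree on the bubble set `B`. -/
def IsTreeOn {L : Type*} (B : Finset ℕ) (arcs : Set (ℕ × L × ℕ)) : Prop :=
  (∀ a l b, (a, l, b) ∈ arcs → a ∈ B ∧ b ∈ B) ∧
  ∃ r ∈ B,
    (¬ ∃ p l, (p, l, r) ∈ arcs) ∧
    (∀ b ∈ B, b ≠ r → ∃! pl : ℕ × L, (pl.1, pl.2, b) ∈ arcs) ∧
    (∀ b ∈ B, Relation.ReflTransGen (ArcRel arcs) r b)

/-- Well-formed bubble tree on a length-`n` sentence. -/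
def WellFormed {L : Type*} (n : ℕ) (B : Finset ℕ) (φ : ℕ → Set (BNode n))
    (arcs : Set (ℕ × L × ℕ)) : Prop :=
  IsTreeOn B arcs ∧
  -- contents are nonempty
  (∀ α ∈ B, (φ α).Nonempty) ∧
  -- no partial overlap
  (∀ α1 ∈ B, ∀ α2 ∈ B, φ α1 ∩ φ α2 = ∅ ∨ φ α1 ⊆ φ α2 ∨ φ α2 ⊆ φ α1) ∧
  -- non-duplication
  (∀ α1 ∈ B, ∀ α2 ∈ B, φ α1 = φ α2 → α1 = α2) ∧
  -- lexical coverage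
  (∀ v : BNode n, ∃ α ∈ B, φ α = {v}) ∧
  -- roothood
  (∃ r ∈ B, φ r = {(none : BNode n)} ∧
    (∀ α ∈ B, (none : BNode n) ∈ φ α → α = r) ∧
    (¬ ∃ p l, (p, l, r) ∈ arcs) ∧
    (∀ b ∈ B, Relation.ReflTransGen (ArcRel arcs) r b)) ∧
  -- containment
  (∀ α1 ∈ B, ∀ α2 ∈ B, φ α2 ⊂ φ α1 → Relation.ReflTransGen (ArcRel arcs) α1 α2)

/-- Projectivity conditions for a well-formed bubble tree. -/
def Projective {L : Type*} (n : ℕ) (B : Finset ℕ) (φ : ℕ → Set (BNode n))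
    (arcs : Set (ℕ × L × ℕ)) : Prop :=
  -- continuous coverage
  (∀ α ∈ B, ∀ i j k : Fin n, i < k → k < j →
    some i ∈ φ α → some j ∈ φ α → some k ∈ φ α) ∧
  -- continuous projections
  (∀ α ∈ B, ∀ i j k : Fin n, i < k → k < j →
    some i ∈ projOf arcs φ α → some j ∈ projOf arcs φ α →
    some k ∈ projOf arcs φ α) ∧
  -- contained projections
  (∀ α1 ∈ B, ∀ α2 ∈ B, Relation.TransGen (ArcRel arcs) α1 α2 →
    projOf arcs φ α2 ⊆ φ α1 ∨ projOf arcs φ α2 ∩ φ α1 = ∅)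

namespace BH
variable {n : ℕ} {L : Type*}

/-! ### positions and intervals -/

def pos : BNode n → ℕ
  | none => 0
  | some i => (i : ℕ) + 1

lemma pos_lt (v : BNode n) : pos v < n + 1 := by
  cases v with
  | none => simp [pos]
  | some i => simpa [pos] using i.2

lemma pos_inj {a b : BNode n} (h : pos a = pos b) : a = b := by
  cases a <;> cases b <;> simp [pos] at h ⊢
  · exact Fin.ext h

def Itv (n a b : ℕ) : Set (BNode n) := {v | a ≤ pos v ∧ pos v < b}

lemma mem_Itv {a b : ℕ} {v : BNode n} : v ∈ Itv n a b ↔ a ≤ pos v ∧ pos v < b :=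
  Iff.rfl

lemma Itv_union {a b c : ℕ} (hab : a ≤ b) (hbc : b ≤ c) :
    Itv n a b ∪ Itv n b c = Itv n a c := by
  ext v; simp only [Set.mem_union, mem_Itv]; omega

lemma Itv_disjoint {a b a' b' : ℕ} (h : b ≤ a') :
    Itv n a b ∩ Itv n a' b' = ∅ := by
  ext v; simp only [Set.mem_inter_iff, mem_Itv, Set.mem_empty_iff_false, iff_false]
  omega

lemma Itv_nonempty {a b : ℕ} (hab : a < b) (hb : b ≤ n + 1) :
    (Itv n a b).Nonempty := by
  rcases Nat.eq_zero_or_pos a with h0 | h0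
  · exact ⟨none, by simp [mem_Itv, pos]; omega⟩
  · refine ⟨some ⟨a - 1, by omega⟩, ?_⟩
    simp [mem_Itv, pos]; omega

lemma Itv_subset {a b a' b' : ℕ} (ha : a' ≤ a) (hb : b ≤ b') :
    Itv n a b ⊆ Itv n a' b' := by
  intro v hv; rcases hv with ⟨h1, h2⟩; exact ⟨by omega, by omega⟩

lemma none_singleton_eq : ({none} : Set (BNode n)) = Itv n 0 1 := by
  ext v
  constructor
  · rintro rfl; simp [mem_Itv, pos]
  · intro hv; rcases hv with ⟨-, h2⟩
    have : pos v = 0 := by omega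
    have := pos_inj (a := v) (b := none) (by simpa [pos] using this)
    simpa using this

lemma some_singleton_eq (k : Fin n) :
    ({some k} : Set (BNode n)) = Itv n ((k : ℕ) + 1) ((k : ℕ) + 2) := by
  ext v
  constructor
  · rintro rfl; simp [mem_Itv, pos]
  · intro hv; rcases hv with ⟨h1, h2⟩
    have : pos v = (k : ℕ) + 1 := by omega
    have := pos_inj (a := v) (b := some k) (by simpa [pos] using this)
    simpa using this

/-! ### segment coverage -/

def Seg (n : ℕ) (ψ : ℕ → Set (BNode n)) : ℕ → ℕ → List ℕ → Prop
  | a, b, [] => a = b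
  | a, b, x :: xs => ∃ m, a < m ∧ ψ x = Itv n a m ∧ Seg n ψ m b xs

lemma Seg.le {ψ : ℕ → Set (BNode n)} :
    ∀ {l : List ℕ} {a b : ℕ}, Seg n ψ a b l → a ≤ b := by
  intro l
  induction l with
  | nil => intro a b h; exact le_of_eq h
  | cons x xs ih =>
    rintro a b ⟨m, hm, -, hs⟩
    exact le_trans (le_of_lt hm) (ih hs)

lemma Seg_append {ψ : ℕ → Set (BNode n)} :
    ∀ {xs ys : List ℕ} {a c : ℕ},
      Seg n ψ a c (xs ++ ys) ↔ ∃ b, Seg n ψ a b xs ∧ Seg n ψ b c ys := by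
  intro xs
  induction xs with
  | nil =>
    intro ys a c
    constructor
    · intro h; exact ⟨a, rfl, h⟩
    · rintro ⟨b, hb, h⟩; cases hb; exact h
  | cons x xs ih =>
    intro ys a c
    constructor
    · rintro ⟨m, hm, hx, hs⟩
      rcases ih.1 hs with ⟨b, h1, h2⟩
      exact ⟨b, ⟨m, hm, hx, h1⟩, h2⟩
    · rintro ⟨b, ⟨m, hm, hx, h1⟩, h2⟩
      exact ⟨m, hm, hx, ih.2 ⟨b, h1, h2⟩⟩

lemma Seg_congr {ψ ψ' : ℕ → Set (BNode n)} :
    ∀ {l : List ℕ} {a b : ℕ}, (∀ x ∈ l, ψ x = ψ' x) → Seg n ψ a b l → Seg n ψ' a b l := by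
  intro l
  induction l with
  | nil => intro a b _ h; exact h
  | cons x xs ih =>
    rintro a b hcong ⟨m, hm, hx, hs⟩
    exact ⟨m, hm, (hcong x (by simp)).symm.trans hx,
      ih (fun y hy => hcong y (by simp [hy])) hs⟩

lemma Seg_mem {ψ : ℕ → Set (BNode n)} :
    ∀ {l : List ℕ} {a b : ℕ}, Seg n ψ a b l → ∀ x ∈ l,
      ∃ p q, a ≤ p ∧ p < q ∧ q ≤ b ∧ ψ x = Itv n p q := by
  intro l
  induction l with
  | nil => intro a b _ x hx; simp at hx
  | cons y ys ih =>
    rintro a b ⟨m, hm, hy, hs⟩ x hx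
    rcases List.mem_cons.1 hx with rfl | hx
    · exact ⟨a, m, le_refl a, hm, hs.le, hy⟩
    · rcases ih hs x hx with ⟨p, q, h1, h2, h3, h4⟩
      exact ⟨p, q, le_trans (le_of_lt hm) h1, h2, h3, h4⟩

end BH
namespace BH
variable {n : ℕ} {L : Type*}

/-! ### reachability and projection lemmas -/

abbrev Reach (A : Set (ℕ × L × ℕ)) := Relation.ReflTransGen (ArcRel A)

lemma reach_mono {A A' : Set (ℕ × L × ℕ)} (h : A ⊆ A') {a b : ℕ}
    (hr : Reach A a b) : Reach A' a b :=
  Relation.ReflTransGen.mono (r := ArcRel A) (p := ArcRel A')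
    (fun x y (hxy : ArcRel A x y) => (Exists.elim hxy fun l hl => ⟨l, h hl⟩ : ArcRel A' x y)) a b hr

lemma reach_no_incoming {A : Set (ℕ × L × ℕ)} {x : ℕ}
    (hx : ∀ p l, (p, l, x) ∉ A) {z : ℕ} (h : Reach A z x) : z = x := by
  induction h with
  | refl => rfl
  | tail h1 h2 ih => rcases h2 with ⟨l, hl⟩; exact absurd hl (hx _ l)

lemma reach_no_outgoing {A : Set (ℕ × L × ℕ)} {x : ℕ}
    (hx : ∀ q l, (x, l, q) ∉ A) {w : ℕ} (h : Reach A x w) : w = x := by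
  induction h using Relation.ReflTransGen.head_induction_on with
  | refl => rfl
  | head h1 h2 ih =>
    rcases h1 with ⟨l, hl⟩; exact absurd hl (hx _ l)

lemma reach_insert_iff {A : Set (ℕ × L × ℕ)} {x y : ℕ} {l0 : L}
    (hx : ∀ p l, (p, l, x) ∉ A) (hy : ∀ p l, (p, l, y) ∉ A) (hxy : x ≠ y)
    {z w : ℕ} :
    Reach (insert (x, l0, y) A) z w ↔ Reach A z w ∨ (z = x ∧ Reach A y w) := by
  constructor
  · intro h
    induction h with
    | refl => exact Or.inl Relation.ReflTransGen.refl
    | tail h1 h2 ih =>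
      rcases h2 with ⟨l, hl⟩
      rcases Set.mem_insert_iff.1 hl with heq | hmem
      · -- (b, l, c) = (x, l0, y), so b = x, c = y
        have hb : _ = x := congrArg Prod.fst heq
        have hc : _ = y := congrArg (fun t => t.2.2) heq
        subst hb; subst hc
        rcases ih with h | ⟨rfl, h⟩
        · exact Or.inr ⟨reach_no_incoming hx h, Relation.ReflTransGen.refl⟩
        · exact absurd (reach_no_incoming hx h) (Ne.symm hxy)
      · rcases ih with h | ⟨rfl, h⟩
        · exact Or.inl (h.tail ⟨l, hmem⟩)
        · exact Or.inr ⟨rfl, h.tail ⟨l, hmem⟩⟩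
  · rintro (h | ⟨rfl, h⟩)
    · exact reach_mono (Set.subset_insert _ _) h
    · exact (Relation.ReflTransGen.single ⟨l0, Set.mem_insert _ _⟩).trans
        (reach_mono (Set.subset_insert _ _) h)

lemma content_subset_proj {A : Set (ℕ × L × ℕ)} {φ : ℕ → Set (BNode n)} (z : ℕ) :
    φ z ⊆ projOf A φ z :=
  fun v hv => ⟨z, Relation.ReflTransGen.refl, hv⟩

lemma proj_mono_reach {A : Set (ℕ × L × ℕ)} {φ : ℕ → Set (BNode n)} {a b : ℕ}
    (h : Reach A a b) : projOf A φ b ⊆ projOf A φ a :=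
  fun v ⟨w, hw, hv⟩ => ⟨w, h.trans hw, hv⟩

lemma proj_insert_ne {A : Set (ℕ × L × ℕ)} {φ : ℕ → Set (BNode n)} {x y : ℕ} {l0 : L}
    (hx : ∀ p l, (p, l, x) ∉ A) (hy : ∀ p l, (p, l, y) ∉ A) (hxy : x ≠ y)
    {z : ℕ} (hz : z ≠ x) :
    projOf (insert (x, l0, y) A) φ z = projOf A φ z := by
  ext v
  simp only [projOf, Set.mem_setOf_eq]
  constructor
  · rintro ⟨w, hw, hv⟩
    rcases (reach_insert_iff hx hy hxy).1 hw with h | ⟨rfl, h⟩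
    · exact ⟨w, h, hv⟩
    · exact absurd rfl hz
  · rintro ⟨w, hw, hv⟩
    exact ⟨w, reach_mono (Set.subset_insert _ _) hw, hv⟩

lemma proj_insert_self {A : Set (ℕ × L × ℕ)} {φ : ℕ → Set (BNode n)} {x y : ℕ} {l0 : L}
    (hx : ∀ p l, (p, l, x) ∉ A) (hy : ∀ p l, (p, l, y) ∉ A) (hxy : x ≠ y) :
    projOf (insert (x, l0, y) A) φ x = projOf A φ x ∪ projOf A φ y := by
  ext v
  simp only [projOf, Set.mem_setOf_eq, Set.mem_union]
  constructor
  · rintro ⟨w, hw, hv⟩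
    rcases (reach_insert_iff hx hy hxy).1 hw with h | ⟨-, h⟩
    · exact Or.inl ⟨w, h, hv⟩
    · exact Or.inr ⟨w, h, hv⟩
  · rintro (⟨w, hw, hv⟩ | ⟨w, hw, hv⟩)
    · exact ⟨w, reach_mono (Set.subset_insert _ _) hw, hv⟩
    · exact ⟨w, (Relation.ReflTransGen.single ⟨l0, Set.mem_insert _ _⟩).trans
        (reach_mono (Set.subset_insert _ _) hw), hv⟩

lemma proj_update_ne {A : Set (ℕ × L × ℕ)} {φ : ℕ → Set (BNode n)} {α : ℕ}
    {S : Set (BNode n)} (hα : ∀ p l, (p, l, α) ∉ A) {z : ℕ} (hz : z ≠ α) :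
    projOf A (Function.update φ α S) z = projOf A φ z := by
  ext v
  simp only [projOf, Set.mem_setOf_eq]
  constructor
  · rintro ⟨w, hw, hv⟩
    have hwα : w ≠ α := by rintro rfl; exact hz (reach_no_incoming hα hw)
    rw [Function.update_of_ne hwα] at hv
    exact ⟨w, hw, hv⟩
  · rintro ⟨w, hw, hv⟩
    have hwα : w ≠ α := by rintro rfl; exact hz (reach_no_incoming hα hw)
    exact ⟨w, hw, by rw [Function.update_of_ne hwα]; exact hv⟩

lemma proj_update_self {A : Set (ℕ × L × ℕ)} {φ : ℕ → Set (BNode n)} {α : ℕ}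
    {S : Set (BNode n)} (h1 : φ α ⊆ S) (h2 : S ⊆ projOf A φ α) :
    projOf A (Function.update φ α S) α = projOf A φ α := by
  apply Set.Subset.antisymm
  · rintro v ⟨w, hw, hv⟩
    by_cases hwα : w = α
    · rw [hwα, Function.update_self] at hv; exact h2 hv
    · rw [Function.update_of_ne hwα] at hv; exact ⟨w, hw, hv⟩
  · rintro v ⟨w, hw, hv⟩
    by_cases hwα : w = α
    · refine ⟨α, hwα ▸ hw, ?_⟩
      rw [Function.update_self]; exact h1 (hwα ▸ hv)
    · exact ⟨w, hw, by rw [Function.update_of_ne hwα]; exact hv⟩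

end BH
namespace BH
variable {n : ℕ} {L : Type*}

def seqOf (c : Config n L) : List ℕ := c.stack.reverse ++ c.buffer

structure Inv (c : Config n L) : Prop where
  hbub : Finset.range (n + 1) ⊆ c.bubbles
  hword : ∀ i, i < n + 1 → c.content i = (initConfig n L).content i
  hopen_stack : ∀ a ∈ c.openB, a ∈ c.stack
  hopen_big : ∀ a ∈ c.openB, n < a
  hnodup : (seqOf c).Nodup
  hseq_bub : ∀ a ∈ seqOf c, a ∈ c.bubbles
  harc_bub : ∀ p l q, (p, l, q) ∈ c.arcs → p ∈ c.bubbles ∧ q ∈ c.bubbles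
  hlive : ∀ a ∈ seqOf c, ∀ p l, (p, l, a) ∉ c.arcs
  huniq : ∀ b ∈ c.bubbles, b ∉ seqOf c → ∃! pl : ℕ × L, (pl.1, pl.2, b) ∈ c.arcs
  hreach : ∀ b ∈ c.bubbles, ∃ a ∈ seqOf c, Reach c.arcs a b
  hcover : Seg n c.proj 0 (n + 1) (seqOf c)
  hcitv : ∀ b ∈ c.bubbles, ∃ p q, p < q ∧ q ≤ n + 1 ∧ c.content b = Itv n p q
  hpitv : ∀ b ∈ c.bubbles, ∃ p q, p < q ∧ q ≤ n + 1 ∧ c.proj b = Itv n p q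
  hstr : ∀ p l q, (p, l, q) ∈ c.arcs →
    c.proj q ⊂ c.content p ∨ c.proj q ∩ c.content p = ∅
  hsib : ∀ p l1 q1 l2 q2, (p, l1, q1) ∈ c.arcs → (p, l2, q2) ∈ c.arcs →
    q1 ≠ q2 → c.proj q1 ∩ c.proj q2 = ∅
  hopenc : ∀ a ∈ c.openB, c.content a = c.proj a

lemma init_content_zero : (initConfig n L).content 0 = ({none} : Set (BNode n)) := by
  ext v
  constructor
  · rintro (⟨-, rfl⟩ | ⟨k, hk, -⟩)
    · rfl
    · exact absurd hk (by omega)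
  · rintro rfl; exact Or.inl ⟨rfl, rfl⟩

lemma init_content_succ (k : Fin n) :
    (initConfig n L).content ((k : ℕ) + 1) = ({some k} : Set (BNode n)) := by
  ext v
  constructor
  · rintro (⟨h, -⟩ | ⟨k', hk', rfl⟩)
    · exact absurd h (by omega)
    · have hkk : k' = k := Fin.ext (by omega)
      rw [hkk]; rfl
  · rintro rfl; exact Or.inr ⟨k, rfl, rfl⟩

lemma proj_empty (φ : ℕ → Set (BNode n)) (z : ℕ) :
    projOf (∅ : Set (ℕ × L × ℕ)) φ z = φ z := by
  ext v
  simp only [projOf, Set.mem_setOf_eq]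
  constructor
  · rintro ⟨w, hw, hv⟩
    have : z = w := by
      have := reach_no_incoming (A := (∅ : Set (ℕ × L × ℕ))) (x := w)
        (fun p l h => h) hw
      exact this.symm ▸ rfl
    rwa [this]
  · intro hv; exact ⟨z, Relation.ReflTransGen.refl, hv⟩

lemma init_seq : seqOf (initConfig n L) = 0 :: (List.range n).map (· + 1) := by
  simp [seqOf, initConfig]

lemma init_proj (i : ℕ) :
    (initConfig n L).proj i = (initConfig n L).content i := by
  simp only [Config.proj]
  exact proj_empty _ i

lemma seg_singletons (ψ : ℕ → Set (BNode n)) :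
    ∀ (m s : ℕ), (∀ i, s ≤ i → i < s + m → ψ i = Itv n i (i + 1)) →
      Seg n ψ s (s + m) (List.range' s m) := by
  intro m
  induction m with
  | zero => intro s _; simp [Seg, List.range']
  | succ m ih =>
    intro s h
    refine ⟨s + 1, by omega, h s le_rfl (by omega), ?_⟩
    have := ih (s + 1) (fun i h1 h2 => h i (by omega) (by omega))
    have heq : s + 1 + m = s + (m + 1) := by omega
    rw [heq] at this
    exact this

lemma range_map_succ : (List.range n).map (· + 1) = List.range' 1 n := by
  rw [List.range'_eq_map_range]
  apply List.map_congr_left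
  intro a _
  omega

lemma inv_init : Inv (initConfig n L) := by
  have hseq := init_seq (n := n) (L := L)
  have hmem_seq : ∀ b : ℕ, b < n + 1 → b ∈ seqOf (initConfig n L) := by
    intro b hb
    rw [hseq]
    rcases Nat.eq_zero_or_pos b with rfl | hpos
    · exact List.mem_cons_self
    · refine List.mem_cons_of_mem _ ?_
      simp only [List.mem_map, List.mem_range]
      exact ⟨b - 1, by omega, by omega⟩
  have hcontent : ∀ b : ℕ, b < n + 1 →
      ∃ p q, p < q ∧ q ≤ n + 1 ∧ (initConfig n L).content b = Itv n p q := by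
    intro b hb
    rcases Nat.eq_zero_or_pos b with rfl | hpos
    · exact ⟨0, 1, by omega, by omega, by rw [init_content_zero, none_singleton_eq]⟩
    · have hk : b - 1 < n := by omega
      have hval : ((⟨b - 1, hk⟩ : Fin n) : ℕ) = b - 1 := rfl
      have hci := init_content_succ (n := n) (L := L) (⟨b - 1, hk⟩ : Fin n)
      rw [hval, show b - 1 + 1 = b from by omega] at hci
      refine ⟨b, b + 1, by omega, by omega, ?_⟩
      rw [hci, some_singleton_eq, hval, show b - 1 + 1 = b from by omega,
        show b - 1 + 2 = b + 1 from by omega]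
  refine ⟨?_, ?_, ?_, ?_, ?_, ?_, ?_, ?_, ?_, ?_, ?_, ?_, ?_, ?_, ?_, ?_⟩
  · exact fun _ h => h
  · intro i _; rfl
  · intro a ha; simp [initConfig] at ha
  · intro a ha; simp [initConfig] at ha
  · rw [hseq]
    refine List.Nodup.cons ?_ ?_
    · simp only [List.mem_map, List.mem_range]
      rintro ⟨a, -, h⟩; omega
    · exact List.Nodup.map (fun a b h => by omega) List.nodup_range
  · intro a ha
    rw [hseq] at ha
    rcases List.mem_cons.1 ha with rfl | ha
    · exact Finset.mem_range.2 (by omega)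
    · simp only [List.mem_map, List.mem_range] at ha
      rcases ha with ⟨b, hb, rfl⟩
      exact Finset.mem_range.2 (by omega)
  · intro p l q h; simp [initConfig] at h
  · intro a _ p l h; simp [initConfig] at h
  · intro b hb hnb
    simp only [initConfig, Finset.mem_range] at hb
    exact absurd (hmem_seq b hb) hnb
  · intro b hb
    simp only [initConfig, Finset.mem_range] at hb
    exact ⟨b, hmem_seq b hb, Relation.ReflTransGen.refl⟩
  · rw [hseq, range_map_succ]
    refine ⟨1, by omega, ?_, ?_⟩
    · rw [init_proj, init_content_zero, none_singleton_eq]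
    · have := seg_singletons ((initConfig n L).proj) n 1
        (fun i h1 h2 => by
          rw [init_proj]
          have hk : i - 1 < n := by omega
          have hval : ((⟨i - 1, hk⟩ : Fin n) : ℕ) = i - 1 := rfl
          have hci := init_content_succ (n := n) (L := L) (⟨i - 1, hk⟩ : Fin n)
          rw [hval, show i - 1 + 1 = i from by omega] at hci
          rw [hci, some_singleton_eq, hval, show i - 1 + 1 = i from by omega,
            show i - 1 + 2 = i + 1 from by omega])
      have h1n : 1 + n = n + 1 := by omega
      rwa [h1n] at this
  · intro b hb
    simp only [initConfig, Finset.mem_range] at hb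
    exact hcontent b hb
  · intro b hb
    simp only [initConfig, Finset.mem_range] at hb
    rw [init_proj]
    exact hcontent b hb
  · intro p l q h; simp [initConfig] at h
  · intro p l1 q1 l2 q2 h; simp [initConfig] at h
  · intro a ha; simp [initConfig] at ha

end BH
namespace BH
variable {n : ℕ} {L : Type*}

lemma inter_empty_mono {γ : Type*} {A B A' B' : Set γ}
    (h : A' ∩ B' = ∅) (hA : A ⊆ A') (hB : B ⊆ B') : A ∩ B = ∅ := by
  rw [Set.eq_empty_iff_forall_notMem] at h ⊢
  exact fun x ⟨h1, h2⟩ => h x ⟨hA h1, hB h2⟩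

lemma ssub_union_right {γ : Type*} {A B : Set γ}
    (hB : B.Nonempty) (hd : A ∩ B = ∅) : A ⊂ A ∪ B := by
  rw [Set.ssubset_iff_subset_ne]
  refine ⟨Set.subset_union_left, fun heq => ?_⟩
  rcases hB with ⟨x, hx⟩
  have hxA : x ∈ A := heq ▸ (Set.mem_union_right _ hx)
  rw [Set.eq_empty_iff_forall_notMem] at hd
  exact hd x ⟨hxA, hx⟩

lemma ssub_union_of_ssub {γ : Type*} {X A B : Set γ} (h : X ⊂ A) : X ⊂ A ∪ B := by
  rw [Set.ssubset_iff_subset_ne] at h ⊢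
  refine ⟨h.1.trans Set.subset_union_left, fun heq => ?_⟩
  have hAX : A ⊆ X := heq ▸ (Set.subset_union_left (t := B))
  exact h.2 (Set.Subset.antisymm h.1 hAX)

lemma ccontent_subset_proj (c : Config n L) (z : ℕ) : c.content z ⊆ c.proj z :=
  content_subset_proj z

lemma triple_eq {p s t q : ℕ} {l lbl : L}
    (h : (p, l, q) = ((s, lbl, t) : ℕ × L × ℕ)) : p = s ∧ l = lbl ∧ q = t := by
  rw [Prod.mk.injEq, Prod.mk.injEq] at h
  exact ⟨h.1, h.2.1, h.2.2⟩

/-- Master lemma: the three "merge" transitions (leftArc, rightArc, bubbleAttach)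
preserve the invariant.  `s` is the surviving bubble (arc source), `t` the popped
bubble (arc target). -/
lemma inv_merge {c c' : Config n L} (inv : Inv c)
    (s t : ℕ) (lbl : L) (xs ys : List ℕ)
    (hseq : seqOf c = xs ++ s :: t :: ys ∨ seqOf c = xs ++ t :: s :: ys)
    (hseq' : seqOf c' = xs ++ s :: ys)
    (hbub' : c'.bubbles = c.bubbles)
    (harcs' : c'.arcs = insert (s, lbl, t) c.arcs)
    (hcont' : (c'.content = c.content ∧ s ∉ c.openB) ∨
      (s ∈ c.openB ∧ c'.content = Function.update c.content s (c.content s ∪ c.proj t)))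
    (hopen' : c'.openB = c.openB)
    (hos : ∀ a ∈ c.openB, a ∈ c'.stack) :
    Inv c' := by
  obtain ⟨hbub, hword, hopen_stack, hopen_big, hnodup, hseq_bub, harc_bub, hlive,
    huniq, hreach, hcover, hcitv, hpitv, hstr, hsib, hopenc⟩ := inv
  -- membership facts
  have hs_seq : s ∈ seqOf c := by
    rcases hseq with h | h <;> rw [h] <;> simp
  have ht_seq : t ∈ seqOf c := by
    rcases hseq with h | h <;> rw [h] <;> simp
  have hs_bub : s ∈ c.bubbles := hseq_bub s hs_seq
  have ht_bub : t ∈ c.bubbles := hseq_bub t ht_seq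
  -- nodup facts
  have hnd : s ∉ xs ∧ s ∉ ys ∧ t ∉ xs ∧ t ∉ ys ∧ s ≠ t ∧ (xs ++ ys).Nodup := by
    rcases hseq with h | h <;> rw [h] at hnodup
    · rw [List.nodup_middle, List.nodup_cons] at hnodup
      obtain ⟨hs1, hs2⟩ := hnodup
      rw [List.nodup_middle, List.nodup_cons] at hs2
      obtain ⟨ht1, ht2⟩ := hs2
      simp only [List.mem_append, List.mem_cons] at hs1 ht1
      exact ⟨fun h => hs1 (Or.inl h), fun h => hs1 (Or.inr (Or.inr h)),
        fun h => ht1 (Or.inl h), fun h => ht1 (Or.inr h),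
        fun h => hs1 (Or.inr (Or.inl h)), ht2⟩
    · rw [List.nodup_middle, List.nodup_cons] at hnodup
      obtain ⟨ht1, ht2⟩ := hnodup
      rw [List.nodup_middle, List.nodup_cons] at ht2
      obtain ⟨hs1, hs2⟩ := ht2
      simp only [List.mem_append, List.mem_cons] at hs1 ht1
      exact ⟨fun h => hs1 (Or.inl h), fun h => hs1 (Or.inr h),
        fun h => ht1 (Or.inl h), fun h => ht1 (Or.inr (Or.inr h)),
        fun h => ht1 (Or.inr (Or.inl h.symm)), hs2⟩
  obtain ⟨hsxs, hsys, htxs, htys, hst, hndxy⟩ := hnd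
  have ht_seq' : t ∉ seqOf c' := by
    rw [hseq']
    simp only [List.mem_append, List.mem_cons]
    rintro (h | h | h)
    · exact htxs h
    · exact hst h.symm
    · exact htys h
  have hmem_seq' : ∀ a, a ∈ seqOf c' → a ∈ seqOf c := by
    intro a ha
    rw [hseq'] at ha
    rcases hseq with h | h <;> rw [h] <;>
      simp only [List.mem_append, List.mem_cons] at ha ⊢ <;> tauto
  have hmem_seq : ∀ a, a ∈ seqOf c → a = t ∨ a ∈ seqOf c' := by
    intro a ha
    rw [hseq']
    rcases hseq with h | h <;> rw [h] at ha <;>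
      simp only [List.mem_append, List.mem_cons] at ha ⊢ <;> tauto
  -- no incoming arcs to s, t
  have hs_no : ∀ p l, (p, l, s) ∉ c.arcs := hlive s hs_seq
  have ht_no : ∀ p l, (p, l, t) ∉ c.arcs := hlive t ht_seq
  -- projection computations
  have hs_no' : ∀ p l, (p, l, s) ∉ insert (s, lbl, t) c.arcs := by
    intro p l hp
    rcases Set.mem_insert_iff.1 hp with heq | hmem
    · exact hst ((triple_eq heq).2.2)
    · exact hs_no p l hmem
  have hP1 : ∀ z, z ≠ s → c'.proj z = c.proj z := by
    intro z hz
    rcases hcont' with ⟨hc, -⟩ | ⟨hsO, hc⟩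
    · show projOf c'.arcs c'.content z = c.proj z
      rw [harcs', hc, proj_insert_ne hs_no ht_no hst hz]; rfl
    · show projOf c'.arcs c'.content z = c.proj z
      rw [harcs', hc, proj_update_ne hs_no' hz,
        proj_insert_ne hs_no ht_no hst hz]; rfl
  have hP2 : c'.proj s = c.proj s ∪ c.proj t := by
    rcases hcont' with ⟨hc, -⟩ | ⟨hsO, hc⟩
    · show projOf c'.arcs c'.content s = c.proj s ∪ c.proj t
      rw [harcs', hc, proj_insert_self hs_no ht_no hst]; rfl
    · show projOf c'.arcs c'.content s = c.proj s ∪ c.proj t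
      rw [harcs', hc, proj_update_self Set.subset_union_left
        (by
          rw [proj_insert_self hs_no ht_no hst]
          exact Set.union_subset_union (content_subset_proj s) (Set.Subset.refl _)),
        proj_insert_self hs_no ht_no hst]
      rfl
  -- interval facts from the cover
  have hseg : ∃ m1 m2 m3, m1 < m2 ∧ m2 < m3 ∧ m3 ≤ n + 1 ∧
      Seg n c.proj 0 m1 xs ∧ Seg n c.proj m3 (n + 1) ys ∧
      c'.proj s = Itv n m1 m3 ∧ c.proj s ∩ c.proj t = ∅ ∧
      (c.proj s).Nonempty ∧ (c.proj t).Nonempty ∧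
      (c.proj s ∪ c.proj t = Itv n m1 m3) := by
    rcases hseq with h | h <;> rw [h] at hcover <;>
      rcases Seg_append.1 hcover with ⟨m1, hxs, hrest⟩
    · obtain ⟨m2, h12, hps, ⟨m3, h23, hpt, hys⟩⟩ := hrest
      have hm3 : m3 ≤ n + 1 := hys.le
      refine ⟨m1, m2, m3, h12, h23, hm3, hxs, hys, ?_, ?_, ?_, ?_, ?_⟩
      · rw [hP2, hps, hpt, Itv_union (by omega) (by omega)]
      · rw [hps, hpt]; exact Itv_disjoint le_rfl
      · rw [hps]; exact Itv_nonempty h12 (by omega)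
      · rw [hpt]; exact Itv_nonempty h23 (by omega)
      · rw [hps, hpt, Itv_union (by omega) (by omega)]
    · obtain ⟨m2, h12, hpt, ⟨m3, h23, hps, hys⟩⟩ := hrest
      have hm3 : m3 ≤ n + 1 := hys.le
      refine ⟨m1, m2, m3, h12, h23, hm3, hxs, hys, ?_, ?_, ?_, ?_, ?_⟩
      · rw [hP2, hps, hpt, Set.union_comm, Itv_union (by omega) (by omega)]
      · rw [hps, hpt]
        rw [Set.inter_comm]; exact Itv_disjoint le_rfl
      · rw [hps]; exact Itv_nonempty h23 (by omega)
      · rw [hpt]; exact Itv_nonempty h12 (by omega)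
      · rw [hps, hpt, Set.union_comm, Itv_union (by omega) (by omega)]
  obtain ⟨m1, m2, m3, h12, h23, hm3, hsegxs, hsegys, hps', hdisj, hsne, htne, hunion⟩ := hseg
  -- content of c' at z ≠ s unchanged
  have hC1 : ∀ z, z ≠ s → c'.content z = c.content z := by
    intro z hz
    rcases hcont' with ⟨hc, -⟩ | ⟨-, hc⟩
    · rw [hc]
    · rw [hc, Function.update_of_ne hz]
  have hC2 : c'.content s = c.content s ∨
      (s ∈ c.openB ∧ c'.content s = c.proj s ∪ c.proj t) := by
    rcases hcont' with ⟨hc, -⟩ | ⟨hsO, hc⟩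
    · exact Or.inl (by rw [hc])
    · refine Or.inr ⟨hsO, ?_⟩
      rw [hc, Function.update_self, hopenc s hsO]
  -- non-live bubbles keep their projections
  have hQ : ∀ q, (∃ p l, (p, l, q) ∈ c.arcs) → c'.proj q = c.proj q := by
    intro q ⟨p, l, hpl⟩
    refine hP1 q fun h => hs_no p l (h ▸ hpl)
  refine ⟨?_, ?_, ?_, ?_, ?_, ?_, ?_, ?_, ?_, ?_, ?_, ?_, ?_, ?_, ?_, ?_⟩
  · rw [hbub']; exact hbub
  · -- hword
    intro i hi
    rcases hcont' with ⟨hc, -⟩ | ⟨hsO, hc⟩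
    · rw [hc]; exact hword i hi
    · rw [hc, Function.update_of_ne (by have := hopen_big s hsO; omega)]
      exact hword i hi
  · -- hopen_stack
    intro a ha; rw [hopen'] at ha; exact hos a ha
  · -- hopen_big
    intro a ha; rw [hopen'] at ha; exact hopen_big a ha
  · -- hnodup
    rw [hseq', List.nodup_middle, List.nodup_cons]
    refine ⟨by simp only [List.mem_append]; tauto, hndxy⟩
  · -- hseq_bub
    intro a ha; rw [hbub']; exact hseq_bub a (hmem_seq' a ha)
  · -- harc_bub
    intro p l q h
    rw [harcs'] at h; rw [hbub']
    rcases Set.mem_insert_iff.1 h with heq | hmem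
    · obtain ⟨h1, -, h3⟩ := triple_eq heq
      exact ⟨h1 ▸ hs_bub, h3 ▸ ht_bub⟩
    · exact harc_bub p l q hmem
  · -- hlive
    intro a ha p l h
    rw [harcs'] at h
    rcases Set.mem_insert_iff.1 h with heq | hmem
    · have hta : a = t := (triple_eq heq).2.2
      exact ht_seq' (hta ▸ ha)
    · exact hlive a (hmem_seq' a ha) p l hmem
  · -- huniq
    intro b hb hb'
    rw [hbub'] at hb
    by_cases hbt : b = t
    · subst hbt
      refine ⟨(s, lbl), by rw [harcs']; exact Set.mem_insert _ _, ?_⟩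
      rintro ⟨p, l⟩ hp
      rw [harcs'] at hp
      rcases Set.mem_insert_iff.1 hp with heq | hmem
      · obtain ⟨h1, h2, -⟩ := triple_eq heq
        exact Prod.ext h1 h2
      · exact absurd hmem (ht_no p l)
    · have hbseq : b ∉ seqOf c := by
        intro h
        rcases hmem_seq b h with rfl | h'
        · exact hbt rfl
        · exact hb' h'
      obtain ⟨⟨p, l⟩, hpl, hu⟩ := huniq b hb hbseq
      refine ⟨(p, l), by rw [harcs']; exact Set.mem_insert_of_mem _ hpl, ?_⟩
      rintro ⟨p', l'⟩ hp'
      rw [harcs'] at hp'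
      rcases Set.mem_insert_iff.1 hp' with heq | hmem
      · exact absurd (triple_eq heq).2.2 hbt
      · exact hu (p', l') hmem
  · -- hreach
    intro b hb
    rw [hbub'] at hb
    obtain ⟨a, ha, hr⟩ := hreach b hb
    have hmono : Reach c'.arcs a b := by
      rw [harcs']; exact reach_mono (Set.subset_insert _ _) hr
    rcases hmem_seq a ha with rfl | ha'
    · refine ⟨s, by rw [hseq']; simp, ?_⟩
      refine Relation.ReflTransGen.trans ?_ hmono
      exact Relation.ReflTransGen.single ⟨lbl, by rw [harcs']; exact Set.mem_insert _ _⟩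
    · exact ⟨a, ha', hmono⟩
  · -- hcover
    rw [hseq']
    refine Seg_append.2 ⟨m1, ?_, ?_⟩
    · refine Seg_congr (fun x hx => (hP1 x fun h => hsxs (h ▸ hx)).symm) hsegxs
    · refine ⟨m3, by omega, hps', ?_⟩
      refine Seg_congr (fun x hx => (hP1 x fun h => hsys (h ▸ hx)).symm) hsegys
  · -- hcitv
    intro b hb
    rw [hbub'] at hb
    by_cases hbs : b = s
    · rw [hbs]
      rcases hC2 with h | ⟨-, h⟩
      · rw [h]; exact hcitv s hs_bub
      · exact ⟨m1, m3, by omega, hm3, by rw [h, hunion]⟩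
    · rw [hC1 b hbs]; exact hcitv b hb
  · -- hpitv
    intro b hb
    rw [hbub'] at hb
    by_cases hbs : b = s
    · rw [hbs]
      exact ⟨m1, m3, by omega, hm3, hps'⟩
    · rw [hP1 b hbs]; exact hpitv b hb
  · -- hstr
    intro p l q h
    rw [harcs'] at h
    rcases Set.mem_insert_iff.1 h with heq | hmem
    · -- the new arc (s, lbl, t)
      obtain ⟨hp, -, hq⟩ := triple_eq heq
      rw [hp, hq, hP1 t hst.symm]
      rcases hC2 with hcc | ⟨hsO, hcc⟩
      · rw [hcc]
        refine Or.inr ?_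
        rw [Set.inter_comm]
        exact inter_empty_mono hdisj (ccontent_subset_proj c s) (Set.Subset.refl _)
      · rw [hcc]
        refine Or.inl ?_
        rw [Set.union_comm]
        exact ssub_union_right hsne (by rw [Set.inter_comm]; exact hdisj)
    · -- old arcs
      have hqs : q ≠ s := fun h => hs_no p l (h ▸ hmem)
      rw [hP1 q hqs]
      by_cases hps : p = s
      · rw [hps] at hmem
        rw [hps]
        rcases hC2 with hcc | ⟨hsO, hcc⟩
        · rw [hcc]; exact hstr s l q hmem
        · rw [hcc]
          rcases hstr s l q hmem with hss | hdd
          · refine Or.inl (ssub_union_of_ssub ?_)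
            rw [hopenc s hsO] at hss
            exact hss
          · refine Or.inr ?_
            rw [hopenc s hsO] at hdd
            rw [Set.inter_union_distrib_left, hdd, Set.empty_union]
            have hq_sub : c.proj q ⊆ c.proj s :=
              proj_mono_reach (Relation.ReflTransGen.single ⟨l, hmem⟩)
            exact inter_empty_mono hdisj hq_sub (Set.Subset.refl _)
      · rw [hC1 p hps]; exact hstr p l q hmem
  · -- hsib
    intro p l1 q1 l2 q2 h1 h2 hq
    rw [harcs'] at h1 h2
    rcases Set.mem_insert_iff.1 h1 with he1 | hm1 <;>
      rcases Set.mem_insert_iff.1 h2 with he2 | hm2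
    · exact absurd ((triple_eq he1).2.2.trans (triple_eq he2).2.2.symm) hq
    · obtain ⟨hp, -, hq1⟩ := triple_eq he1
      rw [hp] at hm2
      rw [hq1, hP1 t hst.symm, hQ q2 ⟨s, l2, hm2⟩]
      have hsub : c.proj q2 ⊆ c.proj s :=
        proj_mono_reach (Relation.ReflTransGen.single ⟨l2, hm2⟩)
      rw [Set.inter_comm]
      exact inter_empty_mono hdisj hsub (Set.Subset.refl _)
    · obtain ⟨hp, -, hq2⟩ := triple_eq he2
      rw [hp] at hm1
      rw [hq2, hP1 t hst.symm, hQ q1 ⟨s, l1, hm1⟩]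
      exact inter_empty_mono hdisj
        (proj_mono_reach (Relation.ReflTransGen.single ⟨l1, hm1⟩)) (Set.Subset.refl _)
    · rw [hQ q1 ⟨p, l1, hm1⟩, hQ q2 ⟨p, l2, hm2⟩]
      exact hsib p l1 q1 l2 q2 hm1 hm2 hq
  · -- hopenc
    intro a ha
    rw [hopen'] at ha
    by_cases has : a = s
    · subst has
      rcases hC2 with h | ⟨-, h⟩
      · rcases hcont' with ⟨-, hns⟩ | ⟨hsO, hc⟩
        · exact absurd ha hns
        · rw [hc, Function.update_self, hP2, hopenc a ha]
      · rw [h, hP2]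
    · rw [hC1 a has, hP1 a has]
      exact hopenc a ha

end BH

namespace BH
variable {n : ℕ} {L : Type*}

/-- Preservation for bubbleOpen. -/
lemma inv_open {c : Config n L} (inv : Inv c) (cj lbl : L) (s1 s2 : ℕ) (σ : List ℕ)
    (α : ℕ) (hstk : c.stack = s1 :: s2 :: σ)
    (hs1o : s1 ∉ c.openB) (hs2o : s2 ∉ c.openB) (hfresh : α ∉ c.bubbles) :
    Inv (⟨α :: σ, c.buffer, insert α c.bubbles,
      Function.update c.content α (c.proj s2 ∪ c.proj s1),
      insert (α, cj, s2) (insert (α, lbl, s1) c.arcs),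
      insert α c.openB⟩ : Config n L) := by
  obtain ⟨hbub, hword, hopen_stack, hopen_big, hnodup, hseq_bub, harc_bub, hlive,
    huniq, hreach, hcover, hcitv, hpitv, hstr, hsib, hopenc⟩ := inv
  set xs := σ.reverse with hxs
  set ys := c.buffer with hys
  set S := c.proj s2 ∪ c.proj s1 with hS
  set A1 := insert (α, lbl, s1) c.arcs with hA1
  set A2 := insert (α, cj, s2) A1 with hA2
  set φ' := Function.update c.content α S with hφ'
  set c' : Config n L := ⟨α :: σ, c.buffer, insert α c.bubbles, φ', A2, insert α c.openB⟩
    with hc'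
  have hseqc : seqOf c = xs ++ s2 :: s1 :: ys := by
    simp [seqOf, hstk, hxs, hys]
  have hseqc' : seqOf c' = xs ++ α :: ys := by
    simp [seqOf, hc', hxs, hys]
  -- nodup facts
  have hnd : s2 ∉ xs ∧ s2 ∉ ys ∧ s1 ∉ xs ∧ s1 ∉ ys ∧ s2 ≠ s1 ∧ (xs ++ ys).Nodup := by
    rw [hseqc] at hnodup
    rw [List.nodup_middle, List.nodup_cons] at hnodup
    obtain ⟨h1, h2⟩ := hnodup
    rw [List.nodup_middle, List.nodup_cons] at h2
    obtain ⟨h3, h4⟩ := h2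
    simp only [List.mem_append, List.mem_cons] at h1 h3
    exact ⟨fun h => h1 (Or.inl h), fun h => h1 (Or.inr (Or.inr h)),
      fun h => h3 (Or.inl h), fun h => h3 (Or.inr h),
      fun h => h1 (Or.inr (Or.inl h)), h4⟩
  obtain ⟨h2xs, h2ys, h1xs, h1ys, h21, hndxy⟩ := hnd
  have hs2seq : s2 ∈ seqOf c := by rw [hseqc]; simp
  have hs1seq : s1 ∈ seqOf c := by rw [hseqc]; simp
  have hs2b : s2 ∈ c.bubbles := hseq_bub _ hs2seq
  have hs1b : s1 ∈ c.bubbles := hseq_bub _ hs1seq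
  have hαseq : α ∉ seqOf c := fun h => hfresh (hseq_bub _ h)
  have hα2 : α ≠ s2 := fun h => hfresh (h ▸ hs2b)
  have hα1 : α ≠ s1 := fun h => hfresh (h ▸ hs1b)
  have hαxs : α ∉ xs := fun h => hαseq (by rw [hseqc]; simp [h])
  have hαys : α ∉ ys := fun h => hαseq (by rw [hseqc]; simp [h])
  have hαbig : ¬ α < n + 1 := fun h => hfresh (hbub (Finset.mem_range.2 h))
  have hαnoin : ∀ p l, (p, l, α) ∉ c.arcs := fun p l h => hfresh (harc_bub p l α h).2
  have hαnoout : ∀ q l, (α, l, q) ∉ c.arcs := fun q l h => hfresh (harc_bub α l q h).1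
  have hs1no : ∀ p l, (p, l, s1) ∉ c.arcs := hlive _ hs1seq
  have hs2no : ∀ p l, (p, l, s2) ∉ c.arcs := hlive _ hs2seq
  -- no-incoming facts for A1, A2
  have hA1α : ∀ p l, (p, l, α) ∉ A1 := by
    intro p l h
    rcases Set.mem_insert_iff.1 h with he | hm
    · exact hα1 ((triple_eq he).2.2)
    · exact hαnoin p l hm
  have hA1s2 : ∀ p l, (p, l, s2) ∉ A1 := by
    intro p l h
    rcases Set.mem_insert_iff.1 h with he | hm
    · exact h21 ((triple_eq he).2.2)
    · exact hs2no p l hm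
  have hA2α : ∀ p l, (p, l, α) ∉ A2 := by
    intro p l h
    rcases Set.mem_insert_iff.1 h with he | hm
    · exact hα2 ((triple_eq he).2.2)
    · exact hA1α p l hm
  -- projection facts
  have hQ1 : ∀ z, z ≠ α → c'.proj z = c.proj z := by
    intro z hz
    show projOf A2 φ' z = c.proj z
    rw [proj_update_ne hA2α hz, hA2, proj_insert_ne hA1α hA1s2 hα2 hz,
      hA1, proj_insert_ne hαnoin hs1no hα1 hz]
    rfl
  have hreachA2 : ∀ w, Reach A2 α w ↔
      (w = α ∨ Reach c.arcs s2 w ∨ Reach c.arcs s1 w) := by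
    intro w
    constructor
    · intro hw
      rcases (reach_insert_iff hA1α hA1s2 hα2).1 hw with h | ⟨-, h⟩
      · rcases (reach_insert_iff hαnoin hs1no hα1).1 h with h2 | ⟨-, h2⟩
        · exact Or.inl (reach_no_outgoing hαnoout h2)
        · exact Or.inr (Or.inr h2)
      · rcases (reach_insert_iff hαnoin hs1no hα1).1 h with h2 | ⟨he, -⟩
        · exact Or.inr (Or.inl h2)
        · exact absurd he.symm hα2
    · rintro (rfl | h | h)
      · exact Relation.ReflTransGen.refl
      · exact (reach_insert_iff hA1α hA1s2 hα2).2
          (Or.inr ⟨rfl, reach_mono (Set.subset_insert _ _) h⟩)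
      · exact (reach_insert_iff hA1α hA1s2 hα2).2
          (Or.inl ((reach_insert_iff hαnoin hs1no hα1).2 (Or.inr ⟨rfl, h⟩)))
  have hQ2 : c'.proj α = S := by
    show projOf A2 φ' α = S
    ext v
    simp only [projOf, Set.mem_setOf_eq]
    constructor
    · rintro ⟨w, hw, hv⟩
      rcases (hreachA2 w).1 hw with rfl | h | h
      · rwa [hφ', Function.update_self] at hv
      · have hwα : w ≠ α := by
          rintro rfl
          exact hα2 (reach_no_incoming hαnoin h).symm
        rw [hφ', Function.update_of_ne hwα] at hv
        exact Or.inl ⟨w, h, hv⟩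
      · have hwα : w ≠ α := by
          rintro rfl
          exact hα1 (reach_no_incoming hαnoin h).symm
        rw [hφ', Function.update_of_ne hwα] at hv
        exact Or.inr ⟨w, h, hv⟩
    · intro hv
      rcases hv with h | h
      · rcases h with ⟨w, hw, hv⟩
        have hwα : w ≠ α := by
          rintro rfl
          exact hα2 (reach_no_incoming hαnoin hw).symm
        exact ⟨w, (hreachA2 w).2 (Or.inr (Or.inl hw)),
          by rwa [hφ', Function.update_of_ne hwα]⟩
      · rcases h with ⟨w, hw, hv⟩
        have hwα : w ≠ α := by
          rintro rfl
          exact hα1 (reach_no_incoming hαnoin hw).symm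
        exact ⟨w, (hreachA2 w).2 (Or.inr (Or.inr hw)),
          by rwa [hφ', Function.update_of_ne hwα]⟩
  -- arcs of c' are A2; membership case analysis helper
  have hmemA2 : ∀ p (l : L) q, (p, l, q) ∈ A2 →
      ((p, l, q) = (α, cj, s2) ∨ (p, l, q) = (α, lbl, s1) ∨ (p, l, q) ∈ c.arcs) := by
    intro p l q h
    rcases Set.mem_insert_iff.1 h with he | hm
    · exact Or.inl he
    · rcases Set.mem_insert_iff.1 hm with he | hm2
      · exact Or.inr (Or.inl he)
      · exact Or.inr (Or.inr hm2)
  have hsubA2 : c.arcs ⊆ A2 :=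
    (Set.subset_insert _ _).trans (Set.subset_insert _ _)
  -- segment data
  rw [hseqc] at hcover
  rcases Seg_append.1 hcover with ⟨m1, hsegxs, hrest⟩
  obtain ⟨m2, h12, hp2, ⟨m3, h23, hp1, hsegys⟩⟩ := hrest
  have hm3 : m3 ≤ n + 1 := hsegys.le
  have hdisj : c.proj s2 ∩ c.proj s1 = ∅ := by
    rw [hp2, hp1]; exact Itv_disjoint le_rfl
  have hs2ne : (c.proj s2).Nonempty := by
    rw [hp2]; exact Itv_nonempty h12 (by omega)
  have hs1ne : (c.proj s1).Nonempty := by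
    rw [hp1]; exact Itv_nonempty h23 (by omega)
  have hSitv : S = Itv n m1 m3 := by
    rw [hS, hp2, hp1, Itv_union (by omega) (by omega)]
  have hCα : c'.content α = S := by
    show φ' α = S
    rw [hφ', Function.update_self]
  have hCne : ∀ z, z ≠ α → c'.content z = c.content z := by
    intro z hz
    show φ' z = c.content z
    rw [hφ', Function.update_of_ne hz]
  have hmem_seq' : ∀ a, a ∈ seqOf c' → a = α ∨ a ∈ seqOf c := by
    intro a ha
    rw [hseqc'] at ha
    rw [hseqc]
    simp only [List.mem_append, List.mem_cons] at ha ⊢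
    tauto
  have hs1seq' : s1 ∉ seqOf c' := by
    rw [hseqc']
    simp only [List.mem_append, List.mem_cons]
    rintro (h | h | h)
    · exact h1xs h
    · exact hα1 h.symm
    · exact h1ys h
  have hs2seq' : s2 ∉ seqOf c' := by
    rw [hseqc']
    simp only [List.mem_append, List.mem_cons]
    rintro (h | h | h)
    · exact h2xs h
    · exact hα2 h.symm
    · exact h2ys h
  have hαseq' : α ∈ seqOf c' := by rw [hseqc']; simp
  refine ⟨?_, ?_, ?_, ?_, ?_, ?_, ?_, ?_, ?_, ?_, ?_, ?_, ?_, ?_, ?_, ?_⟩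
  · exact hbub.trans (Finset.subset_insert _ _)
  · intro i hi
    have : i ≠ α := fun h => hαbig (h ▸ hi)
    rw [hCne i this]
    exact hword i hi
  · intro a ha
    rcases Finset.mem_insert.1 ha with rfl | ha2
    · exact List.mem_cons_self
    · have := hopen_stack a ha2
      rw [hstk] at this
      rcases List.mem_cons.1 this with h | h
      · exact absurd (h ▸ ha2) hs1o
      · rcases List.mem_cons.1 h with h' | h2
        · exact absurd (h' ▸ ha2) hs2o
        · exact List.mem_cons_of_mem _ h2
  · intro a ha
    rcases Finset.mem_insert.1 ha with rfl | ha
    · omega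
    · exact hopen_big a ha
  · rw [hseqc', List.nodup_middle, List.nodup_cons]
    exact ⟨by simp only [List.mem_append]; tauto, hndxy⟩
  · intro a ha
    rcases hmem_seq' a ha with rfl | h
    · exact Finset.mem_insert_self _ _
    · exact Finset.mem_insert_of_mem (hseq_bub a h)
  · intro p l q h
    rcases hmemA2 p l q h with he | he | hm
    · obtain ⟨hp, -, hq⟩ := triple_eq he
      exact ⟨hp ▸ Finset.mem_insert_self _ _, hq ▸ Finset.mem_insert_of_mem hs2b⟩
    · obtain ⟨hp, -, hq⟩ := triple_eq he
      exact ⟨hp ▸ Finset.mem_insert_self _ _, hq ▸ Finset.mem_insert_of_mem hs1b⟩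
    · obtain ⟨h1, h2⟩ := harc_bub p l q hm
      exact ⟨Finset.mem_insert_of_mem h1, Finset.mem_insert_of_mem h2⟩
  · intro a ha p l h
    rcases hmemA2 p l a h with he | he | hm
    · exact hs2seq' ((triple_eq he).2.2 ▸ ha)
    · exact hs1seq' ((triple_eq he).2.2 ▸ ha)
    · rcases hmem_seq' a ha with rfl | h'
      · exact hαnoin p l hm
      · exact hlive a h' p l hm
  · intro b hb hb'
    have hbα : b ≠ α := fun h => hb' (h ▸ hαseq')
    by_cases hb1 : b = s1
    · refine ⟨(α, lbl), ?_, ?_⟩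
      · show (α, lbl, b) ∈ A2
        rw [hb1]
        exact Set.mem_insert_of_mem _ (Set.mem_insert _ _)
      · rintro ⟨p, l⟩ hp
        rcases hmemA2 p l b hp with he | he | hm
        · exact absurd ((triple_eq he).2.2.symm.trans hb1) h21.symm.symm
        · obtain ⟨h1, h2, -⟩ := triple_eq he
          exact Prod.ext h1 h2
        · exact absurd hm (hb1 ▸ hs1no p l)
    · by_cases hb2 : b = s2
      · refine ⟨(α, cj), ?_, ?_⟩
        · show (α, cj, b) ∈ A2
          rw [hb2]
          exact Set.mem_insert _ _
        · rintro ⟨p, l⟩ hp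
          rcases hmemA2 p l b hp with he | he | hm
          · obtain ⟨h1, h2, -⟩ := triple_eq he
            exact Prod.ext h1 h2
          · exact absurd ((triple_eq he).2.2.symm.trans hb2) h21.symm
          · exact absurd hm (hb2 ▸ hs2no p l)
      · have hbseq : b ∉ seqOf c := by
          rw [hseqc]
          rw [hseqc'] at hb'
          simp only [List.mem_append, List.mem_cons] at hb' ⊢
          rintro (h | h | h | h)
          · exact hb' (Or.inl h)
          · exact hb2 h
          · exact hb1 h
          · exact hb' (Or.inr (Or.inr h))
        obtain ⟨⟨p, l⟩, hpl, hu⟩ := huniq b (Finset.mem_insert.1 hb |>.resolve_left hbα) hbseq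
        refine ⟨(p, l), hsubA2 hpl, ?_⟩
        rintro ⟨p', l'⟩ hp'
        rcases hmemA2 p' l' b hp' with he | he | hm
        · exact absurd (triple_eq he).2.2 hb2
        · exact absurd (triple_eq he).2.2 hb1
        · exact hu (p', l') hm
  · intro b hb
    rcases Finset.mem_insert.1 hb with rfl | hb
    · exact ⟨b, hαseq', Relation.ReflTransGen.refl⟩
    · obtain ⟨a, ha, hr⟩ := hreach b hb
      have hr' : Reach A2 a b := reach_mono hsubA2 hr
      rw [hseqc] at ha
      simp only [List.mem_append, List.mem_cons] at ha
      rcases ha with h | h | h | h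
      · exact ⟨a, by rw [hseqc']; simp [h], hr'⟩
      · refine ⟨α, hαseq', Relation.ReflTransGen.trans
          (Relation.ReflTransGen.single ⟨cj, Set.mem_insert _ _⟩) (h ▸ hr')⟩
      · refine ⟨α, hαseq', Relation.ReflTransGen.trans
          (Relation.ReflTransGen.single ⟨lbl,
            Set.mem_insert_of_mem _ (Set.mem_insert _ _)⟩) (h ▸ hr')⟩
      · exact ⟨a, by rw [hseqc']; simp [h], hr'⟩
  · rw [hseqc']
    refine Seg_append.2 ⟨m1, ?_, ?_⟩
    · exact Seg_congr (fun x hx => (hQ1 x fun h => hαxs (h ▸ hx)).symm) hsegxs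
    · refine ⟨m3, by omega, by rw [hQ2, hSitv], ?_⟩
      exact Seg_congr (fun x hx => (hQ1 x fun h => hαys (h ▸ hx)).symm) hsegys
  · intro b hb
    rcases Finset.mem_insert.1 hb with rfl | hb
    · exact ⟨m1, m3, by omega, hm3, by rw [hCα, hSitv]⟩
    · have : b ≠ α := fun h => hfresh (h ▸ hb)
      rw [hCne b this]
      exact hcitv b hb
  · intro b hb
    rcases Finset.mem_insert.1 hb with rfl | hb
    · exact ⟨m1, m3, by omega, hm3, by rw [hQ2, hSitv]⟩
    · have : b ≠ α := fun h => hfresh (h ▸ hb)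
      rw [hQ1 b this]
      exact hpitv b hb
  · intro p l q h
    rcases hmemA2 p l q h with he | he | hm
    · obtain ⟨hp, -, hq⟩ := triple_eq he
      rw [hp, hq, hCα, hQ1 s2 hα2.symm]
      exact Or.inl (ssub_union_right hs1ne hdisj)
    · obtain ⟨hp, -, hq⟩ := triple_eq he
      rw [hp, hq, hCα, hQ1 s1 hα1.symm]
      refine Or.inl ?_
      rw [hS, Set.union_comm]
      exact ssub_union_right hs2ne (by rw [Set.inter_comm]; exact hdisj)
    · have hqα : q ≠ α := fun hh => hαnoin p l (hh ▸ hm)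
      have hpα : p ≠ α := fun hh => hαnoout q l (hh ▸ hm)
      rw [hQ1 q hqα, hCne p hpα]
      exact hstr p l q hm
  · intro p l1 q1 l2 q2 h1 h2 hq
    rcases hmemA2 p l1 q1 h1 with he1 | he1 | hm1 <;>
      rcases hmemA2 p l2 q2 h2 with he2 | he2 | hm2
    · exact absurd ((triple_eq he1).2.2.trans (triple_eq he2).2.2.symm) hq
    · rw [(triple_eq he1).2.2, (triple_eq he2).2.2,
        hQ1 s2 hα2.symm, hQ1 s1 hα1.symm]
      exact hdisj
    · exact absurd ((triple_eq he1).1 ▸ hm2) (hαnoout q2 l2)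
    · rw [(triple_eq he1).2.2, (triple_eq he2).2.2,
        hQ1 s2 hα2.symm, hQ1 s1 hα1.symm]
      rw [Set.inter_comm]
      exact hdisj
    · exact absurd ((triple_eq he1).2.2.trans (triple_eq he2).2.2.symm) hq
    · exact absurd ((triple_eq he1).1 ▸ hm2) (hαnoout q2 l2)
    · exact absurd ((triple_eq he2).1 ▸ hm1) (hαnoout q1 l1)
    · exact absurd ((triple_eq he2).1 ▸ hm1) (hαnoout q1 l1)
    · have hq1α : q1 ≠ α := fun hh => hαnoin p l1 (hh ▸ hm1)
      have hq2α : q2 ≠ α := fun hh => hαnoin p l2 (hh ▸ hm2)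
      rw [hQ1 q1 hq1α, hQ1 q2 hq2α]
      exact hsib p l1 q1 l2 q2 hm1 hm2 hq
  · intro a ha
    rcases Finset.mem_insert.1 ha with rfl | ha
    · rw [hCα, hQ2]
    · have haα : a ≠ α := by
        intro h
        exact hfresh (h ▸ hseq_bub a (by
          rw [hseqc]
          have := hopen_stack a ha
          rw [hstk] at this
          simp only [List.mem_append, List.mem_cons, List.mem_reverse]
          rcases List.mem_cons.1 this with h2 | h2
          · exact Or.inr (Or.inr (Or.inl h2))
          · rcases List.mem_cons.1 h2 with h3 | h3
            · exact Or.inr (Or.inl h3)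
            · exact Or.inl (by rw [hxs]; simpa using h3)))
      rw [hCne a haα, hQ1 a haα]
      exact hopenc a ha

lemma inv_same {c c' : Config n L} (inv : Inv c)
    (hseq : seqOf c' = seqOf c) (hb : c'.bubbles = c.bubbles)
    (hc : c'.content = c.content) (ha : c'.arcs = c.arcs)
    (ho : ∀ a ∈ c'.openB, a ∈ c.openB)
    (hos : ∀ a ∈ c'.openB, a ∈ c'.stack) : Inv c' := by
  have hproj : c'.proj = c.proj := by
    funext z
    show projOf c'.arcs c'.content z = _
    rw [ha, hc]
    rfl
  obtain ⟨hbub, hword, hopen_stack, hopen_big, hnodup, hseq_bub, harc_bub, hlive,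
    huniq, hreach, hcover, hcitv, hpitv, hstr, hsib, hopenc⟩ := inv
  refine ⟨?_, ?_, ?_, ?_, ?_, ?_, ?_, ?_, ?_, ?_, ?_, ?_, ?_, ?_, ?_, ?_⟩
  · rw [hb]; exact hbub
  · intro i hi; rw [hc]; exact hword i hi
  · exact hos
  · intro a h; exact hopen_big a (ho a h)
  · rw [hseq]; exact hnodup
  · intro a h; rw [hb]; exact hseq_bub a (hseq ▸ h)
  · intro p l q h; rw [hb]; exact harc_bub p l q (ha ▸ h)
  · intro a h p l hm; exact hlive a (hseq ▸ h) p l (ha ▸ hm)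
  · intro b hb' hnb
    rw [ha]
    exact huniq b (hb ▸ hb') (by rwa [hseq] at hnb)
  · intro b hb'
    rw [hseq, ha]
    exact hreach b (hb ▸ hb')
  · rw [hseq, hproj]; exact hcover
  · intro b hb'; rw [hc]; exact hcitv b (hb ▸ hb')
  · intro b hb'; rw [hproj]; exact hpitv b (hb ▸ hb')
  · intro p l q h; rw [hproj, hc]; exact hstr p l q (ha ▸ h)
  · intro p l1 q1 l2 q2 h1 h2 hq
    rw [hproj]
    exact hsib p l1 q1 l2 q2 (ha ▸ h1) (ha ▸ h2) hq
  · intro a h; rw [hc, hproj]; exact hopenc a (ho a h)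

lemma inv_step {conj : L} {c c' : Config n L} (hstep : Step conj c c') (inv : Inv c) :
    Inv c' := by
  cases hstep with
  | shift b1 β hbuf =>
    refine inv_same inv ?_ rfl rfl rfl (fun a h => h) ?_
    · simp [seqOf, hbuf]
    · intro a h
      exact List.mem_cons_of_mem _ (inv.hopen_stack a h)
  | leftArc lbl s1 σ b1 β hstk hbuf hs1o hb1o hroot =>
    refine inv_merge inv b1 s1 lbl σ.reverse β (Or.inr ?_) ?_ rfl rfl
      (Or.inl ⟨rfl, hb1o⟩) rfl ?_
    · simp [seqOf, hstk, hbuf]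
    · simp [seqOf, hbuf]
    · intro a h
      have hh := inv.hopen_stack a h
      rw [hstk] at hh
      rcases List.mem_cons.1 hh with h' | h'
      · exact absurd (h' ▸ h) hs1o
      · exact h'
  | rightArc lbl s1 s2 σ hstk hs1o hs2o =>
    refine inv_merge inv s2 s1 lbl σ.reverse c.buffer (Or.inl ?_) ?_ rfl rfl
      (Or.inl ⟨rfl, hs2o⟩) rfl ?_
    · simp [seqOf, hstk]
    · simp [seqOf]
    · intro a h
      have hh := inv.hopen_stack a h
      rw [hstk] at hh
      rcases List.mem_cons.1 hh with h' | h'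
      · exact absurd (h' ▸ h) hs1o
      · exact h'
  | bubbleOpen lbl s1 s2 σ α hstk hs1o hs2o hroot hfresh =>
    exact inv_open inv conj lbl s1 s2 σ α hstk hs1o hs2o hfresh
  | bubbleAttach lbl s1 s2 σ hstk hs1o hs2o =>
    refine inv_merge inv s2 s1 lbl σ.reverse c.buffer (Or.inl ?_) ?_ rfl rfl
      (Or.inr ⟨hs2o, rfl⟩) rfl ?_
    · simp [seqOf, hstk]
    · simp [seqOf]
    · intro a h
      have hh := inv.hopen_stack a h
      rw [hstk] at hh
      rcases List.mem_cons.1 hh with h' | h'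
      · exact absurd (h' ▸ h) hs1o
      · exact h'
  | bubbleClose s1 σ hstk hs1o =>
    refine inv_same inv ?_ rfl rfl rfl (fun a h => Finset.mem_of_mem_erase h) ?_
    · simp [seqOf, hstk]
    · intro a h
      have h1 : a ∈ c.openB := Finset.mem_of_mem_erase h
      have h2 : a ≠ s1 := Finset.ne_of_mem_erase h
      have hh := inv.hopen_stack a h1
      rw [hstk] at hh
      rcases List.mem_cons.1 hh with h' | h'
      · exact absurd h' h2
      · exact h'

lemma inv_reachable {conj : L} {c : Config n L} (h : Reachable conj c) : Inv c := by
  induction h with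
  | refl => exact inv_init
  | tail hsteps hstep ih => exact inv_step hstep ih

end BH
namespace BH
variable {n : ℕ} {L : Type*}

lemma ssub_sub {γ : Type*} {X Y : Set γ} (h : X ⊂ Y) : X ⊆ Y :=
  (Set.ssubset_iff_subset_ne.1 h).1

lemma ssub_of_sub_ssub {γ : Type*} {X Y Z : Set γ} (h1 : X ⊆ Y) (h2 : Y ⊂ Z) :
    X ⊂ Z := by
  rw [Set.ssubset_iff_subset_ne] at h2 ⊢
  refine ⟨h1.trans h2.1, fun he => h2.2 (Set.Subset.antisymm h2.1 (he ▸ h1))⟩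

lemma incomp_disjoint {A : Set (ℕ × L × ℕ)} {φ : ℕ → Set (BNode n)}
    (hsib : ∀ p l1 q1 l2 q2, (p, l1, q1) ∈ A → (p, l2, q2) ∈ A → q1 ≠ q2 →
      projOf A φ q1 ∩ projOf A φ q2 = ∅)
    {b x : ℕ} (hbx : Reach A b x) :
    ∀ y, Reach A b y → ¬ Reach A x y → ¬ Reach A y x →
      projOf A φ x ∩ projOf A φ y = ∅ := by
  induction hbx using Relation.ReflTransGen.head_induction_on with
  | refl => intro y hy hxy _; exact absurd hy hxy
  | head hac hcx ih =>
    rename_i a c1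
    intro y hby hxy hyx
    rcases Relation.ReflTransGen.cases_head hby with heq | ⟨c2, hac2, hc2y⟩
    · exact absurd (heq ▸ Relation.ReflTransGen.head hac hcx) hyx
    · by_cases hcc : c1 = c2
      · exact ih y (hcc ▸ hc2y) hxy hyx
      · rcases hac with ⟨l1, h1⟩
        rcases hac2 with ⟨l2, h2⟩
        exact inter_empty_mono (hsib _ l1 _ l2 _ h1 h2 hcc)
          (proj_mono_reach hcx) (proj_mono_reach hc2y)

lemma terminal_sound {c : Config n L} (inv : Inv c) (hterm : Terminal c) :
    WellFormed n c.bubbles c.content c.arcs ∧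
      Projective n c.bubbles c.content c.arcs := by
  obtain ⟨hbuf0, r, hstk0, hrc⟩ := hterm
  obtain ⟨hbub, hword, hopen_stack, hopen_big, hnodup, hseq_bub, harc_bub, hlive,
    huniq, hreach, hcover, hcitv, hpitv, hstr, hsib, hopenc⟩ := inv
  have hseqr : seqOf c = [r] := by simp [seqOf, hstk0, hbuf0]
  have hrseq : r ∈ seqOf c := by rw [hseqr]; simp
  have hrb : r ∈ c.bubbles := hseq_bub r hrseq
  have hreach_r : ∀ b ∈ c.bubbles, Reach c.arcs r b := by
    intro b hb
    obtain ⟨a, ha, hr⟩ := hreach b hb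
    rw [hseqr, List.mem_singleton] at ha
    exact ha ▸ hr
  have hnoin_r : ∀ p l, (p, l, r) ∉ c.arcs := hlive r hrseq
  have hce : ∀ b ∈ c.bubbles, (c.content b).Nonempty := by
    intro b hb
    obtain ⟨p, q, h1, h2, h3⟩ := hcitv b hb
    rw [h3]; exact Itv_nonempty h1 h2
  have hpe : ∀ b ∈ c.bubbles, (c.proj b).Nonempty := by
    intro b hb
    obtain ⟨p, q, h1, h2, h3⟩ := hpitv b hb
    rw [h3]; exact Itv_nonempty h1 h2
  have hstep1 : ∀ a1 a2 : ℕ, Reach c.arcs a1 a2 → a1 ≠ a2 →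
      (c.proj a2 ⊂ c.content a1 ∨ c.proj a2 ∩ c.content a1 = ∅) := by
    intro a1 a2 h hne
    rcases Relation.ReflTransGen.cases_head h with heq | ⟨m, ⟨l, hl⟩, hm⟩
    · exact absurd heq hne
    · rcases hstr _ l _ hl with hss | hdd
      · exact Or.inl (ssub_of_sub_ssub (proj_mono_reach hm) hss)
      · exact Or.inr (inter_empty_mono hdd (proj_mono_reach hm) (Set.Subset.refl _))
  have tri : ∀ a1 ∈ c.bubbles, ∀ a2 ∈ c.bubbles,
      Reach c.arcs a1 a2 ∨ Reach c.arcs a2 a1 ∨ c.proj a1 ∩ c.proj a2 = ∅ := by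
    intro a1 h1 a2 h2
    by_cases h12 : Reach c.arcs a1 a2
    · exact Or.inl h12
    by_cases h21 : Reach c.arcs a2 a1
    · exact Or.inr (Or.inl h21)
    exact Or.inr (Or.inr
      (incomp_disjoint hsib (hreach_r a1 h1) a2 (hreach_r a2 h2) h12 h21))
  have content_rel : ∀ a1 a2, Reach c.arcs a1 a2 → a1 ≠ a2 →
      (c.content a2 ⊂ c.content a1 ∨ c.content a2 ∩ c.content a1 = ∅) := by
    intro a1 a2 h hne
    rcases hstep1 a1 a2 h hne with hss | hdd
    · exact Or.inl (ssub_of_sub_ssub (ccontent_subset_proj c a2) hss)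
    · exact Or.inr (inter_empty_mono hdd (ccontent_subset_proj c a2) (Set.Subset.refl _))
  constructor
  · refine ⟨⟨harc_bub, r, hrb, fun ⟨p, l, h⟩ => hnoin_r p l h, ?_, hreach_r⟩,
      hce, ?_, ?_, ?_, ?_, ?_⟩
    · -- unique head
      intro b hb hne
      exact huniq b hb (by rw [hseqr]; simpa using hne)
    · -- no partial overlap
      intro a1 h1 a2 h2
      by_cases he : a1 = a2
      · exact Or.inr (Or.inl (he ▸ Set.Subset.refl _))
      rcases tri a1 h1 a2 h2 with h12 | h21 | hd
      · rcases content_rel a1 a2 h12 he with hss | hdd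
        · exact Or.inr (Or.inr (ssub_sub hss))
        · exact Or.inl (by rw [Set.inter_comm]; exact hdd)
      · rcases content_rel a2 a1 h21 (fun h => he h.symm) with hss | hdd
        · exact Or.inr (Or.inl (ssub_sub hss))
        · exact Or.inl hdd
      · exact Or.inl (inter_empty_mono hd (ccontent_subset_proj c a1)
          (ccontent_subset_proj c a2))
    · -- non-duplication
      intro a1 h1 a2 h2 heq
      by_contra hne
      obtain ⟨x, hx1⟩ := hce a1 h1
      have hx2 : x ∈ c.content a2 := heq ▸ hx1
      rcases tri a1 h1 a2 h2 with h12 | h21 | hd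
      · rcases content_rel a1 a2 h12 hne with hss | hdd
        · rw [heq, Set.ssubset_iff_subset_ne] at hss
          exact hss.2 rfl
        · rw [Set.eq_empty_iff_forall_notMem] at hdd
          exact hdd x ⟨hx2, hx1⟩
      · rcases content_rel a2 a1 h21 (fun h => hne h.symm) with hss | hdd
        · rw [heq, Set.ssubset_iff_subset_ne] at hss
          exact hss.2 rfl
        · rw [Set.eq_empty_iff_forall_notMem] at hdd
          exact hdd x ⟨hx1, hx2⟩
      · rw [Set.eq_empty_iff_forall_notMem] at hd
        exact hd x ⟨ccontent_subset_proj c a1 hx1, ccontent_subset_proj c a2 hx2⟩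
    · -- lexical coverage
      intro v
      refine ⟨pos v, hbub (Finset.mem_range.2 (pos_lt v)), ?_⟩
      rw [hword (pos v) (pos_lt v)]
      cases v with
      | none => exact init_content_zero
      | some k => exact init_content_succ k
    · -- roothood
      refine ⟨r, hrb, hrc, ?_, fun ⟨p, l, h⟩ => hnoin_r p l h, hreach_r⟩
      intro a ha hnone
      by_contra hne
      rcases Relation.ReflTransGen.cases_head (hreach_r a ha) with heq | ⟨m, ⟨l, hl⟩, hm⟩
      · exact hne heq.symm
      · rcases hstr r l m hl with hss | hdd
        · rw [hrc, Set.ssubset_singleton_iff] at hss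
          obtain ⟨x, hx⟩ := hpe m (harc_bub r l m hl).2
          rw [hss] at hx
          exact hx
        · rw [hrc, Set.eq_empty_iff_forall_notMem] at hdd
          exact hdd none ⟨proj_mono_reach hm (ccontent_subset_proj c a hnone), rfl⟩
    · -- containment
      intro a1 h1 a2 h2 hss
      rcases tri a1 h1 a2 h2 with h12 | h21 | hd
      · exact h12
      · by_cases he : a1 = a2
        · exact he ▸ Relation.ReflTransGen.refl
        rcases content_rel a2 a1 h21 (fun h => he h.symm) with hss2 | hdd
        · rw [Set.ssubset_iff_subset_ne] at hss hss2
          exact absurd (Set.Subset.antisymm hss.1 hss2.1) hss.2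
        · obtain ⟨x, hx⟩ := hce a2 h2
          rw [Set.eq_empty_iff_forall_notMem] at hdd
          exact absurd ⟨ssub_sub hss hx, hx⟩ (hdd x)
      · obtain ⟨x, hx⟩ := hce a2 h2
        rw [Set.eq_empty_iff_forall_notMem] at hd
        exact absurd ⟨ccontent_subset_proj c a1 (ssub_sub hss hx),
          ccontent_subset_proj c a2 hx⟩ (hd x)
  · refine ⟨?_, ?_, ?_⟩
    · -- continuous coverage
      intro a ha i j k hik hkj hi hj
      obtain ⟨p, q, -, -, he⟩ := hcitv a ha
      rw [he] at hi hj ⊢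
      rw [mem_Itv] at hi hj ⊢
      simp only [pos] at hi hj ⊢
      have h1 : (i : ℕ) < (k : ℕ) := hik
      have h2 : (k : ℕ) < (j : ℕ) := hkj
      omega
    · -- continuous projections
      intro a ha i j k hik hkj hi hj
      obtain ⟨p, q, -, -, he⟩ := hpitv a ha
      have he' : projOf c.arcs c.content a = Itv n p q := he
      rw [he'] at hi hj ⊢
      rw [mem_Itv] at hi hj ⊢
      simp only [pos] at hi hj ⊢
      have h1 : (i : ℕ) < (k : ℕ) := hik
      have h2 : (k : ℕ) < (j : ℕ) := hkj
      omega
    · -- contained projections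
      intro a1 h1 a2 h2 htg
      rcases Relation.TransGen.head'_iff.1 htg with ⟨m, ⟨l, hl⟩, hm⟩
      rcases hstr a1 l m hl with hss | hdd
      · exact Or.inl ((proj_mono_reach hm).trans (ssub_sub hss))
      · exact Or.inr (inter_empty_mono hdd
          (proj_mono_reach (φ := c.content) hm) (Set.Subset.refl _))

end BH


/-- **(Soundness of the Bubble-Hybrid transition system)**
For every sentence `W = w_1, …, w_n`, every valid transition sequence for `W`
produces a projective well-formed bubble tree on `W`. -/
theorem bubbleHybrid_soundness (n : ℕ) (L : Type*) [Fintype L] (conj : L)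
    (c : Config n L) (hreach : Reachable conj c) (hterm : Terminal c) :
    WellFormed n c.bubbles c.content c.arcs ∧
    Projective n c.bubbles c.content c.arcs :=
  BH.terminal_sound (BH.inv_reachable hreach) hterm
end

section
/- (No-partial-overlap invariant) For every sentence W = w_1, …, w_n and every reachable configuration (σ, β, B, φ, A, O) of the Bubble-Hybrid transition system for W, the no-partial-overlap condition holds: for all bubbles α1, α2 ∈ B, either φ(α1) ∩ φ(α2) = ∅ or φ(α1) ⊆ φ(α2) or φ(α2) ⊆ φ(α1). -/
section Helpers

open Relation

variable {n : ℕ} {L : Type*}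

lemma rtg_mono {arcs arcs' : Set (ℕ × L × ℕ)} (h : arcs ⊆ arcs') {X Y : ℕ}
    (hr : ReflTransGen (ArcRel arcs) X Y) : ReflTransGen (ArcRel arcs') X Y := by
  induction hr with
  | refl => exact .refl
  | tail _ h2 ih => exact ih.tail ⟨h2.choose, h h2.choose_spec⟩

lemma projOf_mono {arcs arcs' : Set (ℕ × L × ℕ)} (h : arcs ⊆ arcs')
    (φ : ℕ → Set (BNode n)) (X : ℕ) : projOf arcs φ X ⊆ projOf arcs' φ X := by
  rintro v ⟨α', hα', hv⟩; exact ⟨α', rtg_mono h hα', hv⟩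

/-- if `p` has no incoming arcs, any path ending at `p` is trivial. -/
lemma rtg_end_noInc {arcs : Set (ℕ × L × ℕ)} {p : ℕ}
    (hp : ∀ a l, (a, l, p) ∈ arcs → False) {X : ℕ}
    (h : ReflTransGen (ArcRel arcs) X p) : X = p := by
  cases h.cases_tail with
  | inl h => exact h.symm
  | inr h => obtain ⟨b, _, l, hl⟩ := h; exact absurd hl (hp b l)

lemma rtg_mem {arcs : Set (ℕ × L × ℕ)} {B : Finset ℕ}
    (hend : ∀ a l b, (a, l, b) ∈ arcs → a ∈ B ∧ b ∈ B) {X Y : ℕ} (hX : X ∈ B)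
    (h : ReflTransGen (ArcRel arcs) X Y) : Y ∈ B := by
  induction h with
  | refl => exact hX
  | tail _ h2 _ => exact (hend _ _ _ h2.choose_spec).2

/-- paths starting outside `B` are trivial. -/
lemma rtg_start_not_mem {arcs : Set (ℕ × L × ℕ)} {B : Finset ℕ}
    (hend : ∀ a l b, (a, l, b) ∈ arcs → a ∈ B ∧ b ∈ B) {X Y : ℕ} (hX : X ∉ B)
    (h : ReflTransGen (ArcRel arcs) X Y) : Y = X := by
  cases h.cases_head with
  | inl h => exact h.symm
  | inr h => obtain ⟨b, ⟨l, hl⟩, _⟩ := h; exact absurd (hend _ _ _ hl).1 hX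

lemma rtg_insert_elim {arcs : Set (ℕ × L × ℕ)} {p ch : ℕ} {l : L}
    (hp : ∀ a l', (a, l', p) ∈ arcs → False) (hpch : p ≠ ch) {X Y : ℕ}
    (h : ReflTransGen (ArcRel (insert (p, l, ch) arcs)) X Y) :
    ReflTransGen (ArcRel arcs) X Y ∨ (X = p ∧ ReflTransGen (ArcRel arcs) ch Y) := by
  induction h with
  | refl => exact Or.inl .refl
  | tail h1 h2 ih =>
    obtain ⟨l', hl'⟩ := h2
    rcases Set.mem_insert_iff.mp hl' with heq | hmem
    · obtain ⟨h1, h2, h3⟩ := Prod.mk.injEq .. ▸ heq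
      obtain ⟨h2, h3⟩ := Prod.mk.injEq .. ▸ (Prod.ext_iff.mp heq).2
      rcases ih with hold | ⟨rfl, hch⟩
      · subst h1; exact Or.inr ⟨rtg_end_noInc hp hold, h3 ▸ .refl⟩
      · subst h1; exact absurd (rtg_end_noInc hp hch) (Ne.symm hpch)
    · rcases ih with hold | ⟨rfl, hch⟩
      · exact Or.inl (hold.tail ⟨l', hmem⟩)
      · exact Or.inr ⟨rfl, hch.tail ⟨l', hmem⟩⟩

lemma projOf_insert_ne {arcs : Set (ℕ × L × ℕ)} {p ch : ℕ} {l : L}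
    (hp : ∀ a l', (a, l', p) ∈ arcs → False) (hpch : p ≠ ch)
    (φ : ℕ → Set (BNode n)) {X : ℕ} (hX : X ≠ p) :
    projOf (insert (p, l, ch) arcs) φ X = projOf arcs φ X := by
  apply Set.Subset.antisymm
  · rintro v ⟨α', hα', hv⟩
    rcases rtg_insert_elim hp hpch hα' with hold | ⟨rfl, _⟩
    · exact ⟨α', hold, hv⟩
    · exact absurd rfl hX
  · exact projOf_mono (Set.subset_insert _ _) φ X

lemma projOf_insert_self {arcs : Set (ℕ × L × ℕ)} {p ch : ℕ} {l : L}
    (hp : ∀ a l', (a, l', p) ∈ arcs → False) (hpch : p ≠ ch)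
    (φ : ℕ → Set (BNode n)) :
    projOf (insert (p, l, ch) arcs) φ p = projOf arcs φ p ∪ projOf arcs φ ch := by
  apply Set.Subset.antisymm
  · rintro v ⟨α', hα', hv⟩
    rcases rtg_insert_elim hp hpch hα' with hold | ⟨_, hch⟩
    · exact Or.inl ⟨α', hold, hv⟩
    · exact Or.inr ⟨α', hch, hv⟩
  · rintro v (⟨α', hα', hv⟩ | ⟨α', hα', hv⟩)
    · exact ⟨α', rtg_mono (Set.subset_insert _ _) hα', hv⟩
    · exact ⟨α', .head ⟨l, Set.mem_insert _ _⟩ (rtg_mono (Set.subset_insert _ _) hα'), hv⟩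

lemma projOf_update_ne {arcs : Set (ℕ × L × ℕ)} {u : ℕ}
    (hu : ∀ a l, (a, l, u) ∈ arcs → False) (φ : ℕ → Set (BNode n))
    (S : Set (BNode n)) {X : ℕ} (hX : X ≠ u) :
    projOf arcs (Function.update φ u S) X = projOf arcs φ X := by
  have key : ∀ α', ReflTransGen (ArcRel arcs) X α' →
      Function.update φ u S α' = φ α' := by
    intro α' hα'
    have : α' ≠ u := fun h => hX (rtg_end_noInc hu (h ▸ hα'))
    exact Function.update_of_ne this _ _
  apply Set.Subset.antisymm
  · rintro v ⟨α', hα', hv⟩; exact ⟨α', hα', key α' hα' ▸ hv⟩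
  · rintro v ⟨α', hα', hv⟩; exact ⟨α', hα', (key α' hα').symm ▸ hv⟩

lemma projOf_empty (φ : ℕ → Set (BNode n)) (X : ℕ) :
    projOf (∅ : Set (ℕ × L × ℕ)) φ X = φ X := by
  apply Set.Subset.antisymm
  · rintro v ⟨α', hα', hv⟩
    cases hα'.cases_head with
    | inl h => exact h ▸ hv
    | inr h => obtain ⟨b, ⟨l, hl⟩, _⟩ := h; exact absurd hl (Set.notMem_empty _)
  · intro v hv; exact ⟨X, .refl, hv⟩

end Helpers
section Invariant

open Relation

variable {n : ℕ} {L : Type*}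

/-- The master invariant maintained by the transition system. -/
structure BHInv (c : Config n L) : Prop where
  nodup : (c.stack ++ c.buffer).Nodup
  roots_mem : ∀ r ∈ c.stack ++ c.buffer, r ∈ c.bubbles
  arcs_mem : ∀ a l b, (a, l, b) ∈ c.arcs → a ∈ c.bubbles ∧ b ∈ c.bubbles
  roots_noInc : ∀ r ∈ c.stack ++ c.buffer, ∀ p l, (p, l, r) ∈ c.arcs → False
  roots_disj : ∀ r1 ∈ c.stack ++ c.buffer, ∀ r2 ∈ c.stack ++ c.buffer, r1 ≠ r2 →
    c.proj r1 ∩ c.proj r2 = ∅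
  content_root : ∀ X ∈ c.bubbles, ∀ r ∈ c.stack ++ c.buffer,
    c.content X ⊆ c.proj r ∨ c.content X ∩ c.proj r = ∅
  open_eq : ∀ X ∈ c.openB, c.content X = c.proj X
  open_mem : ∀ X ∈ c.openB, X ∈ c.bubbles
  lam : ∀ X1 ∈ c.bubbles, ∀ X2 ∈ c.bubbles,
    c.content X1 ∩ c.content X2 = ∅ ∨
    c.content X1 ⊆ c.content X2 ∨ c.content X2 ⊆ c.content X1

lemma initContent_disj (i j : ℕ) (hij : i ≠ j) :
    (initConfig n L).content i ∩ (initConfig n L).content j = ∅ := by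
  apply Set.eq_empty_iff_forall_notMem.mpr
  rintro v ⟨hi, hj⟩
  simp only [initConfig, Set.mem_setOf_eq] at hi hj
  rcases hi with ⟨rfl, rfl⟩ | ⟨k, rfl, rfl⟩ <;>
    rcases hj with ⟨rfl, hv⟩ | ⟨k', rfl, hv⟩ <;> simp_all

lemma inv_init : BHInv (initConfig n L) := by
  have hproj : ∀ X, (initConfig n L).proj X = (initConfig n L).content X := by
    intro X
    show projOf (∅ : Set (ℕ × L × ℕ)) _ X = _
    rw [projOf_empty]
  constructor
  · show (0 :: (List.range n).map (· + 1)).Nodup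
    rw [List.nodup_cons]
    refine ⟨by simp, List.Nodup.map (fun a b h => by omega) List.nodup_range⟩
  · intro r hr
    simp only [initConfig, List.singleton_append, List.mem_cons, List.mem_map,
      List.mem_range] at hr
    simp only [initConfig, Finset.mem_range]
    rcases hr with rfl | ⟨k, hk, rfl⟩ <;> omega
  · intro a l b h; exact absurd h (Set.notMem_empty _)
  · intro r _ p l h; exact absurd h (Set.notMem_empty _)
  · intro r1 _ r2 _ h12; rw [hproj, hproj]; exact initContent_disj r1 r2 h12
  · intro X _ r _
    rw [hproj]
    by_cases hXr : X = r
    · exact Or.inl (hXr ▸ Set.Subset.refl _)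
    · exact Or.inr (initContent_disj X r hXr)
  · intro X hX; exact absurd hX (Finset.notMem_empty _)
  · intro X hX; exact absurd hX (Finset.notMem_empty _)
  · intro X1 _ X2 _
    by_cases h : X1 = X2
    · exact Or.inr (Or.inl (h ▸ Set.Subset.refl _))
    · exact Or.inl (initContent_disj X1 X2 h)

end Invariant
section StepLemma

open Relation

variable {n : ℕ} {L : Type*}

lemma union_inter_empty {X : Type*} {A B C : Set X} (h1 : A ∩ C = ∅) (h2 : B ∩ C = ∅) :
    (A ∪ B) ∩ C = ∅ := by
  rw [Set.union_inter_distrib_right, h1, h2, Set.union_empty]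

lemma inter_union_empty {X : Type*} {A B C : Set X} (h1 : A ∩ B = ∅) (h2 : A ∩ C = ∅) :
    A ∩ (B ∪ C) = ∅ := by
  rw [Set.inter_union_distrib_left, h1, h2, Set.union_empty]

lemma inter_empty_comm {X : Type*} {A B : Set X} (h : A ∩ B = ∅) : B ∩ A = ∅ := by
  rw [Set.inter_comm]; exact h

lemma inv_step {conj : L} {c c' : Config n L} (hinv : BHInv c) (hstep : Step conj c c') :
    BHInv c' := by
  cases hstep with
  | shift b1 β hbuf =>
    have hperm : List.Perm ((b1 :: c.stack) ++ β) (c.stack ++ c.buffer) := by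
      rw [hbuf, List.cons_append]; exact List.perm_middle.symm
    exact {
      nodup := hperm.nodup_iff.mpr hinv.nodup
      roots_mem := fun r hr => hinv.roots_mem r (hperm.mem_iff.mp hr)
      arcs_mem := hinv.arcs_mem
      roots_noInc := fun r hr => hinv.roots_noInc r (hperm.mem_iff.mp hr)
      roots_disj := fun r1 h1 r2 h2 h12 =>
        hinv.roots_disj r1 (hperm.mem_iff.mp h1) r2 (hperm.mem_iff.mp h2) h12
      content_root := fun X hX r hr => hinv.content_root X hX r (hperm.mem_iff.mp hr)
      open_eq := hinv.open_eq
      open_mem := hinv.open_mem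
      lam := hinv.lam }
  | bubbleClose s1 σ hstk hs1 =>
    have hperm : List.Perm (σ ++ (s1 :: c.buffer)) (c.stack ++ c.buffer) := by
      rw [hstk, List.cons_append]; exact List.perm_middle
    exact {
      nodup := hperm.nodup_iff.mpr hinv.nodup
      roots_mem := fun r hr => hinv.roots_mem r (hperm.mem_iff.mp hr)
      arcs_mem := hinv.arcs_mem
      roots_noInc := fun r hr => hinv.roots_noInc r (hperm.mem_iff.mp hr)
      roots_disj := fun r1 h1 r2 h2 h12 =>
        hinv.roots_disj r1 (hperm.mem_iff.mp h1) r2 (hperm.mem_iff.mp h2) h12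
      content_root := fun X hX r hr => hinv.content_root X hX r (hperm.mem_iff.mp hr)
      open_eq := fun X hX => hinv.open_eq X (Finset.mem_of_mem_erase hX)
      open_mem := fun X hX => hinv.open_mem X (Finset.mem_of_mem_erase hX)
      lam := hinv.lam }
  | leftArc lbl s1 σ b1 β hstk hbuf hs1 hb1 hroot =>
    -- leftArc case body
    have hnd : (s1 :: (σ ++ c.buffer)).Nodup := by
      have h := hinv.nodup; rw [hstk, List.cons_append] at h; exact h
    have hs1_not : s1 ∉ σ ++ c.buffer := (List.nodup_cons.mp hnd).1
    have hrest_nd : (σ ++ c.buffer).Nodup := (List.nodup_cons.mp hnd).2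
    have hb1_rest : b1 ∈ σ ++ c.buffer := by rw [hbuf]; simp
    have hs1b1 : s1 ≠ b1 := fun h => hs1_not (h ▸ hb1_rest)
    have hmem_s1 : s1 ∈ c.stack ++ c.buffer := by rw [hstk]; simp
    have hsub : ∀ r ∈ σ ++ c.buffer, r ∈ c.stack ++ c.buffer := by
      intro r hr; rw [hstk, List.cons_append]; exact List.mem_cons_of_mem _ hr
    have hmem_b1 : b1 ∈ c.stack ++ c.buffer := hsub b1 hb1_rest
    have hs1B : s1 ∈ c.bubbles := hinv.roots_mem s1 hmem_s1
    have hb1B : b1 ∈ c.bubbles := hinv.roots_mem b1 hmem_b1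
    have hni_s1 := hinv.roots_noInc s1 hmem_s1
    have hni_b1 := hinv.roots_noInc b1 hmem_b1
    have hPn : ∀ X, X ≠ b1 →
        projOf (insert (b1, lbl, s1) c.arcs) c.content X = c.proj X :=
      fun X hX => projOf_insert_ne hni_b1 (Ne.symm hs1b1) c.content hX
    have hPp : projOf (insert (b1, lbl, s1) c.arcs) c.content b1 = c.proj b1 ∪ c.proj s1 :=
      projOf_insert_self hni_b1 (Ne.symm hs1b1) c.content
    refine { nodup := hrest_nd, roots_mem := fun r hr => hinv.roots_mem r (hsub r hr),
             arcs_mem := ?_, roots_noInc := ?_, roots_disj := ?_, content_root := ?_,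
             open_eq := ?_, open_mem := hinv.open_mem, lam := hinv.lam }
    · rintro a l b h
      rcases Set.mem_insert_iff.mp h with heq | hold
      · obtain ⟨rfl, -, rfl⟩ := Prod.mk.injEq .. ▸ heq
        exact ⟨hb1B, hs1B⟩
      · exact hinv.arcs_mem a l b hold
    · rintro r hr p l h
      rcases Set.mem_insert_iff.mp h with heq | hold
      · obtain ⟨-, -, rfl⟩ := Prod.mk.injEq .. ▸ heq
        exact hs1_not hr
      · exact hinv.roots_noInc r (hsub r hr) p l hold
    · rintro r1 hr1 r2 hr2 h12
      simp only [Config.proj] at *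
      by_cases h1 : r1 = b1
      · subst h1
        rw [hPp, hPn r2 (fun h => h12 h.symm)]
        exact union_inter_empty
          (hinv.roots_disj r1 hmem_b1 r2 (hsub r2 hr2) h12)
          (hinv.roots_disj s1 hmem_s1 r2 (hsub r2 hr2) (fun h => hs1_not (h ▸ hr2)))
      · by_cases h2 : r2 = b1
        · subst h2
          rw [hPp, hPn r1 h1]
          exact inter_empty_comm (union_inter_empty
            (hinv.roots_disj r2 hmem_b1 r1 (hsub r1 hr1) (Ne.symm h12))
            (hinv.roots_disj s1 hmem_s1 r1 (hsub r1 hr1) (fun h => hs1_not (h ▸ hr1))))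
        · rw [hPn r1 h1, hPn r2 h2]
          exact hinv.roots_disj r1 (hsub r1 hr1) r2 (hsub r2 hr2) h12
    · rintro X hX r hr
      simp only [Config.proj] at *
      by_cases h1 : r = b1
      · subst h1
        rw [hPp]
        rcases hinv.content_root X hX r hmem_b1 with h | h
        · exact Or.inl (h.trans Set.subset_union_left)
        · rcases hinv.content_root X hX s1 hmem_s1 with h' | h'
          · exact Or.inl (h'.trans Set.subset_union_right)
          · exact Or.inr (inter_union_empty h h')
      · rw [hPn r h1]
        exact hinv.content_root X hX r (hsub r hr)
    · rintro X hX
      have hXb1 : X ≠ b1 := fun h => hb1 (h ▸ hX)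
      show c.content X = projOf (insert (b1, lbl, s1) c.arcs) c.content X
      rw [hPn X hXb1]
      exact hinv.open_eq X hX

  | rightArc lbl s1 s2 σ hstk hs1 hs2 =>
    -- rightArc case body
    have hnd : (s1 :: ((s2 :: σ) ++ c.buffer)).Nodup := by
      have h := hinv.nodup; rw [hstk, List.cons_append, List.cons_append] at h
      rw [List.cons_append]; exact h
    have hs1_not : s1 ∉ (s2 :: σ) ++ c.buffer := (List.nodup_cons.mp hnd).1
    have hrest_nd : ((s2 :: σ) ++ c.buffer).Nodup := (List.nodup_cons.mp hnd).2
    have hs2_rest : s2 ∈ (s2 :: σ) ++ c.buffer := by simp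
    have hs1s2 : s1 ≠ s2 := fun h => hs1_not (h ▸ hs2_rest)
    have hmem_s1 : s1 ∈ c.stack ++ c.buffer := by rw [hstk]; simp
    have hsub : ∀ r ∈ (s2 :: σ) ++ c.buffer, r ∈ c.stack ++ c.buffer := by
      intro r hr; rw [hstk, List.cons_append]
      exact List.mem_cons_of_mem _ (by rw [List.cons_append] at hr ⊢; exact hr)
    have hmem_s2 : s2 ∈ c.stack ++ c.buffer := hsub s2 hs2_rest
    have hs1B : s1 ∈ c.bubbles := hinv.roots_mem s1 hmem_s1
    have hs2B : s2 ∈ c.bubbles := hinv.roots_mem s2 hmem_s2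
    have hni_s1 := hinv.roots_noInc s1 hmem_s1
    have hni_s2 := hinv.roots_noInc s2 hmem_s2
    have hPn : ∀ X, X ≠ s2 →
        projOf (insert (s2, lbl, s1) c.arcs) c.content X = c.proj X :=
      fun X hX => projOf_insert_ne hni_s2 (Ne.symm hs1s2) c.content hX
    have hPp : projOf (insert (s2, lbl, s1) c.arcs) c.content s2 = c.proj s2 ∪ c.proj s1 :=
      projOf_insert_self hni_s2 (Ne.symm hs1s2) c.content
    refine { nodup := hrest_nd, roots_mem := fun r hr => hinv.roots_mem r (hsub r hr),
             arcs_mem := ?_, roots_noInc := ?_, roots_disj := ?_, content_root := ?_,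
             open_eq := ?_, open_mem := hinv.open_mem, lam := hinv.lam }
    · rintro a l b h
      rcases Set.mem_insert_iff.mp h with heq | hold
      · obtain ⟨rfl, -, rfl⟩ := Prod.mk.injEq .. ▸ heq
        exact ⟨hs2B, hs1B⟩
      · exact hinv.arcs_mem a l b hold
    · rintro r hr p l h
      rcases Set.mem_insert_iff.mp h with heq | hold
      · obtain ⟨-, -, rfl⟩ := Prod.mk.injEq .. ▸ heq
        exact hs1_not hr
      · exact hinv.roots_noInc r (hsub r hr) p l hold
    · rintro r1 hr1 r2 hr2 h12
      simp only [Config.proj] at *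
      by_cases h1 : r1 = s2
      · subst h1
        rw [hPp, hPn r2 (fun h => h12 h.symm)]
        exact union_inter_empty
          (hinv.roots_disj r1 hmem_s2 r2 (hsub r2 hr2) h12)
          (hinv.roots_disj s1 hmem_s1 r2 (hsub r2 hr2) (fun h => hs1_not (h ▸ hr2)))
      · by_cases h2 : r2 = s2
        · subst h2
          rw [hPp, hPn r1 h1]
          exact inter_empty_comm (union_inter_empty
            (hinv.roots_disj r2 hmem_s2 r1 (hsub r1 hr1) (Ne.symm h12))
            (hinv.roots_disj s1 hmem_s1 r1 (hsub r1 hr1) (fun h => hs1_not (h ▸ hr1))))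
        · rw [hPn r1 h1, hPn r2 h2]
          exact hinv.roots_disj r1 (hsub r1 hr1) r2 (hsub r2 hr2) h12
    · rintro X hX r hr
      simp only [Config.proj] at *
      by_cases h1 : r = s2
      · subst h1
        rw [hPp]
        rcases hinv.content_root X hX r hmem_s2 with h | h
        · exact Or.inl (h.trans Set.subset_union_left)
        · rcases hinv.content_root X hX s1 hmem_s1 with h' | h'
          · exact Or.inl (h'.trans Set.subset_union_right)
          · exact Or.inr (inter_union_empty h h')
      · rw [hPn r h1]
        exact hinv.content_root X hX r (hsub r hr)
    · rintro X hX
      have hXs2 : X ≠ s2 := fun h => hs2 (h ▸ hX)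
      show c.content X = projOf (insert (s2, lbl, s1) c.arcs) c.content X
      rw [hPn X hXs2]
      exact hinv.open_eq X hX

  | bubbleOpen lbl s1 s2 σ α hstk hs1 hs2 hroot hfresh =>
    -- bubbleOpen case body
    have hnd : (s1 :: (s2 :: (σ ++ c.buffer))).Nodup := by
      have h := hinv.nodup
      rw [hstk, List.cons_append, List.cons_append] at h; exact h
    have hs1_not : s1 ∉ s2 :: (σ ++ c.buffer) := (List.nodup_cons.mp hnd).1
    have hnd2 : (s2 :: (σ ++ c.buffer)).Nodup := (List.nodup_cons.mp hnd).2
    have hs2_not : s2 ∉ σ ++ c.buffer := (List.nodup_cons.mp hnd2).1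
    have hrest_nd : (σ ++ c.buffer).Nodup := (List.nodup_cons.mp hnd2).2
    have hmem_s1 : s1 ∈ c.stack ++ c.buffer := by rw [hstk]; simp
    have hmem_s2 : s2 ∈ c.stack ++ c.buffer := by rw [hstk]; simp
    have hsub : ∀ r ∈ σ ++ c.buffer, r ∈ c.stack ++ c.buffer := by
      intro r hr; rw [hstk, List.cons_append, List.cons_append]
      exact List.mem_cons_of_mem _ (List.mem_cons_of_mem _ hr)
    have hs1B : s1 ∈ c.bubbles := hinv.roots_mem s1 hmem_s1
    have hs2B : s2 ∈ c.bubbles := hinv.roots_mem s2 hmem_s2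
    have hni_s1 := hinv.roots_noInc s1 hmem_s1
    have hni_s2 := hinv.roots_noInc s2 hmem_s2
    have hα_ne_s1 : α ≠ s1 := fun h => hfresh (h ▸ hs1B)
    have hα_ne_s2 : α ≠ s2 := fun h => hfresh (h ▸ hs2B)
    have hα_not : α ∉ σ ++ c.buffer := fun h => hfresh (hinv.roots_mem α (hsub α h))
    have hαni : ∀ a l', (a, l', α) ∈ c.arcs → False :=
      fun a l' h => hfresh ((hinv.arcs_mem a l' α h).2)
    set A1 := insert (α, lbl, s1) c.arcs with hA1
    set A' := insert (α, conj, s2) A1 with hA'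
    set φ' := Function.update c.content α (c.proj s2 ∪ c.proj s1) with hφ'
    have hαniA1 : ∀ a l', (a, l', α) ∈ A1 → False := by
      rintro a l' h
      rcases Set.mem_insert_iff.mp h with heq | hold
      · exact hα_ne_s1 (congrArg (fun t => t.2.2) heq)
      · exact hαni a l' hold
    have hαniA' : ∀ a l', (a, l', α) ∈ A' → False := by
      rintro a l' h
      rcases Set.mem_insert_iff.mp h with heq | hold
      · exact hα_ne_s2 (congrArg (fun t => t.2.2) heq)
      · exact hαniA1 a l' hold
    have hPn : ∀ X, X ≠ α → projOf A' φ' X = c.proj X := by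
      intro X hX
      rw [hφ', projOf_update_ne hαniA' c.content _ hX, hA',
        projOf_insert_ne hαniA1 hα_ne_s2 c.content hX, hA1]
      exact projOf_insert_ne hαni hα_ne_s1 c.content hX
    have hPα : projOf A' φ' α = c.proj s2 ∪ c.proj s1 := by
      apply Set.Subset.antisymm
      · rintro v ⟨α', hα', hv⟩
        rcases rtg_insert_elim hαniA1 hα_ne_s2 hα' with h1 | ⟨-, h2⟩
        · rcases rtg_insert_elim hαni hα_ne_s1 h1 with h3 | ⟨-, h4⟩
          · have he : α' = α := rtg_start_not_mem hinv.arcs_mem hfresh h3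
            rw [he, hφ', Function.update_self] at hv
            exact hv
          · have hα'B : α' ∈ c.bubbles := rtg_mem hinv.arcs_mem hs1B h4
            have hne : α' ≠ α := fun h => hfresh (h ▸ hα'B)
            rw [hφ', Function.update_of_ne hne] at hv
            exact Or.inr ⟨α', h4, hv⟩
        · rcases rtg_insert_elim hαni hα_ne_s1 h2 with h3 | ⟨heq, -⟩
          · have hα'B : α' ∈ c.bubbles := rtg_mem hinv.arcs_mem hs2B h3
            have hne : α' ≠ α := fun h => hfresh (h ▸ hα'B)
            rw [hφ', Function.update_of_ne hne] at hv
            exact Or.inl ⟨α', h3, hv⟩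
          · exact absurd heq.symm hα_ne_s2
      · intro v hv
        exact ⟨α, .refl, by rw [hφ', Function.update_self]; exact hv⟩
    have hCα : φ' α = c.proj s2 ∪ c.proj s1 := by rw [hφ', Function.update_self]
    have hCn : ∀ X, X ≠ α → φ' X = c.content X := by
      intro X hX; rw [hφ', Function.update_of_ne hX]
    refine { nodup := ?_, roots_mem := ?_, arcs_mem := ?_, roots_noInc := ?_,
             roots_disj := ?_, content_root := ?_, open_eq := ?_, open_mem := ?_,
             lam := ?_ }
    · show ((α :: σ) ++ c.buffer).Nodup
      rw [List.cons_append]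
      exact List.nodup_cons.mpr ⟨hα_not, hrest_nd⟩
    · intro r hr
      rw [List.cons_append] at hr
      rcases List.mem_cons.mp hr with rfl | h
      · exact Finset.mem_insert_self _ _
      · exact Finset.mem_insert_of_mem (hinv.roots_mem r (hsub r h))
    · rintro a l b h
      rcases Set.mem_insert_iff.mp h with heq | h
      · have h1 : a = α := congrArg (fun t => t.1) heq
        have h3 : b = s2 := congrArg (fun t => t.2.2) heq
        exact ⟨h1 ▸ Finset.mem_insert_self _ _, h3 ▸ Finset.mem_insert_of_mem hs2B⟩
      · rcases Set.mem_insert_iff.mp h with heq | hold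
        · have h1 : a = α := congrArg (fun t => t.1) heq
          have h3 : b = s1 := congrArg (fun t => t.2.2) heq
          exact ⟨h1 ▸ Finset.mem_insert_self _ _, h3 ▸ Finset.mem_insert_of_mem hs1B⟩
        · exact ⟨Finset.mem_insert_of_mem (hinv.arcs_mem a l b hold).1,
            Finset.mem_insert_of_mem (hinv.arcs_mem a l b hold).2⟩
    · rintro r hr p l h
      rw [List.cons_append] at hr
      rcases Set.mem_insert_iff.mp h with heq | h
      · have h3 : r = s2 := congrArg (fun t => t.2.2) heq
        subst h3
        rcases List.mem_cons.mp hr with heq2 | h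
        · exact hα_ne_s2 heq2.symm
        · exact hs2_not h
      · rcases Set.mem_insert_iff.mp h with heq | hold
        · have h3 : r = s1 := congrArg (fun t => t.2.2) heq
          subst h3
          rcases List.mem_cons.mp hr with heq2 | h
          · exact hα_ne_s1 heq2.symm
          · exact hs1_not (List.mem_cons_of_mem _ h)
        · rcases List.mem_cons.mp hr with rfl | h
          · exact hαni p l hold
          · exact hinv.roots_noInc r (hsub r h) p l hold
    · rintro r1 hr1 r2 hr2 h12
      show projOf A' φ' r1 ∩ projOf A' φ' r2 = ∅
      rw [List.cons_append] at hr1 hr2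
      rcases List.mem_cons.mp hr1 with rfl | h1
      · rcases List.mem_cons.mp hr2 with rfl | h2
        · exact absurd rfl h12
        · rw [hPα, hPn r2 (fun h => h12 h.symm)]
          exact union_inter_empty
            (hinv.roots_disj s2 hmem_s2 r2 (hsub r2 h2) (fun h => hs2_not (h ▸ h2)))
            (hinv.roots_disj s1 hmem_s1 r2 (hsub r2 h2)
              (fun h => hs1_not (List.mem_cons_of_mem _ (h ▸ h2))))
      · rcases List.mem_cons.mp hr2 with rfl | h2
        · rw [hPα, hPn r1 (fun h => h12 h)]
          exact inter_empty_comm (union_inter_empty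
            (hinv.roots_disj s2 hmem_s2 r1 (hsub r1 h1) (fun h => hs2_not (h ▸ h1)))
            (hinv.roots_disj s1 hmem_s1 r1 (hsub r1 h1)
              (fun h => hs1_not (List.mem_cons_of_mem _ (h ▸ h1)))))
        · rw [hPn r1 (fun h => hα_not (h ▸ h1)), hPn r2 (fun h => hα_not (h ▸ h2))]
          exact hinv.roots_disj r1 (hsub r1 h1) r2 (hsub r2 h2) h12
    · rintro X hX r hr
      show φ' X ⊆ projOf A' φ' r ∨ φ' X ∩ projOf A' φ' r = ∅
      rw [List.cons_append] at hr
      rcases Finset.mem_insert.mp hX with rfl | hXB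
      · rw [hCα]
        rcases List.mem_cons.mp hr with rfl | h2
        · rw [hPα]; exact Or.inl (Set.Subset.refl _)
        · rw [hPn r (fun h => hα_not (h ▸ h2))]
          exact Or.inr (union_inter_empty
            (hinv.roots_disj s2 hmem_s2 r (hsub r h2) (fun h => hs2_not (h ▸ h2)))
            (hinv.roots_disj s1 hmem_s1 r (hsub r h2)
              (fun h => hs1_not (List.mem_cons_of_mem _ (h ▸ h2)))))
      · have hXα : X ≠ α := fun h => hfresh (h ▸ hXB)
        rw [hCn X hXα]
        rcases List.mem_cons.mp hr with rfl | h2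
        · rw [hPα]
          rcases hinv.content_root X hXB s2 hmem_s2 with h | h
          · exact Or.inl (h.trans Set.subset_union_left)
          · rcases hinv.content_root X hXB s1 hmem_s1 with h' | h'
            · exact Or.inl (h'.trans Set.subset_union_right)
            · exact Or.inr (inter_union_empty h h')
        · rw [hPn r (fun h => hα_not (h ▸ h2))]
          exact hinv.content_root X hXB r (hsub r h2)
    · rintro X hX
      show φ' X = projOf A' φ' X
      rcases Finset.mem_insert.mp hX with rfl | hXO
      · rw [hCα, hPα]
      · have hXB : X ∈ c.bubbles := hinv.open_mem X hXO
        have hXα : X ≠ α := fun h => hfresh (h ▸ hXB)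
        rw [hCn X hXα, hPn X hXα]
        exact hinv.open_eq X hXO
    · rintro X hX
      rcases Finset.mem_insert.mp hX with rfl | hXO
      · exact Finset.mem_insert_self _ _
      · exact Finset.mem_insert_of_mem (hinv.open_mem X hXO)
    · rintro X1 hX1 X2 hX2
      show φ' X1 ∩ φ' X2 = ∅ ∨ φ' X1 ⊆ φ' X2 ∨ φ' X2 ⊆ φ' X1
      rcases Finset.mem_insert.mp hX1 with rfl | h1
      · rcases Finset.mem_insert.mp hX2 with rfl | h2
        · exact Or.inr (Or.inl (Set.Subset.refl _))
        · rw [hCα, hCn X2 (fun h => hfresh (h ▸ h2))]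
          rcases hinv.content_root X2 h2 s2 hmem_s2 with h | h
          · exact Or.inr (Or.inr (h.trans Set.subset_union_left))
          · rcases hinv.content_root X2 h2 s1 hmem_s1 with h' | h'
            · exact Or.inr (Or.inr (h'.trans Set.subset_union_right))
            · exact Or.inl (inter_empty_comm (inter_union_empty h h'))
      · rcases Finset.mem_insert.mp hX2 with rfl | h2
        · rw [hCα, hCn X1 (fun h => hfresh (h ▸ h1))]
          rcases hinv.content_root X1 h1 s2 hmem_s2 with h | h
          · exact Or.inr (Or.inl (h.trans Set.subset_union_left))
          · rcases hinv.content_root X1 h1 s1 hmem_s1 with h' | h'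
            · exact Or.inr (Or.inl (h'.trans Set.subset_union_right))
            · exact Or.inl (inter_union_empty h h')
        · rw [hCn X1 (fun h => hfresh (h ▸ h1)), hCn X2 (fun h => hfresh (h ▸ h2))]
          exact hinv.lam X1 h1 X2 h2

  | bubbleAttach lbl s1 s2 σ hstk hs1 hs2 =>
    -- bubbleAttach case body
    have hnd : (s1 :: ((s2 :: σ) ++ c.buffer)).Nodup := by
      have h := hinv.nodup; rw [hstk, List.cons_append, List.cons_append] at h
      rw [List.cons_append]; exact h
    have hs1_not : s1 ∉ (s2 :: σ) ++ c.buffer := (List.nodup_cons.mp hnd).1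
    have hrest_nd : ((s2 :: σ) ++ c.buffer).Nodup := (List.nodup_cons.mp hnd).2
    have hs2_rest : s2 ∈ (s2 :: σ) ++ c.buffer := by simp
    have hs1s2 : s1 ≠ s2 := fun h => hs1_not (h ▸ hs2_rest)
    have hmem_s1 : s1 ∈ c.stack ++ c.buffer := by rw [hstk]; simp
    have hsub : ∀ r ∈ (s2 :: σ) ++ c.buffer, r ∈ c.stack ++ c.buffer := by
      intro r hr; rw [hstk, List.cons_append]
      exact List.mem_cons_of_mem _ (by rw [List.cons_append] at hr ⊢; exact hr)
    have hmem_s2 : s2 ∈ c.stack ++ c.buffer := hsub s2 hs2_rest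
    have hs1B : s1 ∈ c.bubbles := hinv.roots_mem s1 hmem_s1
    have hs2B : s2 ∈ c.bubbles := hinv.roots_mem s2 hmem_s2
    have hni_s1 := hinv.roots_noInc s1 hmem_s1
    have hni_s2 := hinv.roots_noInc s2 hmem_s2
    have hopen : c.content s2 = c.proj s2 := hinv.open_eq s2 hs2
    set A' := insert (s2, lbl, s1) c.arcs with hA'
    set φ' := Function.update c.content s2 (c.content s2 ∪ c.proj s1) with hφ'
    have hs2_noInc' : ∀ a l', (a, l', s2) ∈ A' → False := by
      rintro a l' h
      rcases Set.mem_insert_iff.mp h with heq | hold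
      · exact hs1s2 (congrArg (fun t => t.2.2) heq).symm
      · exact hni_s2 a l' hold
    have hPn : ∀ X, X ≠ s2 → projOf A' φ' X = c.proj X := by
      intro X hX
      rw [hφ', projOf_update_ne hs2_noInc' c.content _ hX, hA']
      exact projOf_insert_ne hni_s2 (Ne.symm hs1s2) c.content hX
    have hPp : projOf A' φ' s2 = c.proj s2 ∪ c.proj s1 := by
      apply Set.Subset.antisymm
      · rintro v ⟨α', hα', hv⟩
        rcases rtg_insert_elim hni_s2 (Ne.symm hs1s2) hα' with hold | ⟨-, hch⟩
        · by_cases hα2 : α' = s2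
          · subst hα2
            rw [hφ', Function.update_self] at hv
            rcases hv with h | h
            · exact Or.inl (hopen ▸ h)
            · exact Or.inr h
          · rw [hφ', Function.update_of_ne hα2] at hv
            exact Or.inl ⟨α', hold, hv⟩
        · have hne : α' ≠ s2 := fun h => hs1s2 (rtg_end_noInc hni_s2 (h ▸ hch))
          rw [hφ', Function.update_of_ne hne] at hv
          exact Or.inr ⟨α', hch, hv⟩
      · rintro v (⟨α', hα', hv⟩ | hv)
        · by_cases hα2 : α' = s2
          · exact ⟨s2, .refl, by
              rw [hφ', Function.update_self]; exact Or.inl (hα2 ▸ hv)⟩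
          · exact ⟨α', rtg_mono (Set.subset_insert _ _) hα',
              by rw [hφ', Function.update_of_ne hα2]; exact hv⟩
        · exact ⟨s2, .refl, by rw [hφ', Function.update_self]; exact Or.inr hv⟩
    have hC2 : φ' s2 = c.proj s2 ∪ c.proj s1 := by
      rw [hφ', Function.update_self, hopen]
    have hCn : ∀ X, X ≠ s2 → φ' X = c.content X := by
      intro X hX; rw [hφ', Function.update_of_ne hX]
    refine { nodup := hrest_nd, roots_mem := fun r hr => hinv.roots_mem r (hsub r hr),
             arcs_mem := ?_, roots_noInc := ?_, roots_disj := ?_, content_root := ?_,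
             open_eq := ?_, open_mem := hinv.open_mem, lam := ?_ }
    · rintro a l b h
      rcases Set.mem_insert_iff.mp h with heq | hold
      · obtain ⟨rfl, -, rfl⟩ := Prod.mk.injEq .. ▸ heq
        exact ⟨hs2B, hs1B⟩
      · exact hinv.arcs_mem a l b hold
    · rintro r hr p l h
      rcases Set.mem_insert_iff.mp h with heq | hold
      · obtain ⟨-, -, rfl⟩ := Prod.mk.injEq .. ▸ heq
        exact hs1_not hr
      · exact hinv.roots_noInc r (hsub r hr) p l hold
    · rintro r1 hr1 r2 hr2 h12
      show projOf A' φ' r1 ∩ projOf A' φ' r2 = ∅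
      by_cases h1 : r1 = s2
      · subst h1
        rw [hPp, hPn r2 (fun h => h12 h.symm)]
        exact union_inter_empty
          (hinv.roots_disj r1 hmem_s2 r2 (hsub r2 hr2) h12)
          (hinv.roots_disj s1 hmem_s1 r2 (hsub r2 hr2) (fun h => hs1_not (h ▸ hr2)))
      · by_cases h2 : r2 = s2
        · subst h2
          rw [hPp, hPn r1 h1]
          exact inter_empty_comm (union_inter_empty
            (hinv.roots_disj r2 hmem_s2 r1 (hsub r1 hr1) (Ne.symm h12))
            (hinv.roots_disj s1 hmem_s1 r1 (hsub r1 hr1) (fun h => hs1_not (h ▸ hr1))))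
        · rw [hPn r1 h1, hPn r2 h2]
          exact hinv.roots_disj r1 (hsub r1 hr1) r2 (hsub r2 hr2) h12
    · rintro X hX r hr
      show φ' X ⊆ projOf A' φ' r ∨ φ' X ∩ projOf A' φ' r = ∅
      by_cases hXs2 : X = s2
      · subst hXs2
        rw [hC2]
        by_cases hr2 : r = X
        · subst hr2
          rw [hPp]
          exact Or.inl (Set.Subset.refl _)
        · rw [hPn r hr2]
          exact Or.inr (union_inter_empty
            (hinv.roots_disj X hmem_s2 r (hsub r hr) (fun h => hr2 h.symm))
            (hinv.roots_disj s1 hmem_s1 r (hsub r hr) (fun h => hs1_not (h ▸ hr))))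
      · rw [hCn X hXs2]
        by_cases hr2 : r = s2
        · subst hr2
          rw [hPp]
          rcases hinv.content_root X hX r hmem_s2 with h | h
          · exact Or.inl (h.trans Set.subset_union_left)
          · rcases hinv.content_root X hX s1 hmem_s1 with h' | h'
            · exact Or.inl (h'.trans Set.subset_union_right)
            · exact Or.inr (inter_union_empty h h')
        · rw [hPn r hr2]
          exact hinv.content_root X hX r (hsub r hr)
    · rintro X hX
      show φ' X = projOf A' φ' X
      by_cases hXs2 : X = s2
      · subst hXs2; rw [hC2, hPp]
      · rw [hCn X hXs2, hPn X hXs2]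
        exact hinv.open_eq X hX
    · rintro X1 hX1 X2 hX2
      show φ' X1 ∩ φ' X2 = ∅ ∨ φ' X1 ⊆ φ' X2 ∨ φ' X2 ⊆ φ' X1
      by_cases h1 : X1 = s2
      · subst h1
        by_cases h2 : X2 = X1
        · subst h2; exact Or.inr (Or.inl (Set.Subset.refl _))
        · rw [hC2, hCn X2 h2]
          rcases hinv.content_root X2 hX2 X1 hmem_s2 with h | h
          · exact Or.inr (Or.inr (h.trans Set.subset_union_left))
          · rcases hinv.content_root X2 hX2 s1 hmem_s1 with h' | h'
            · exact Or.inr (Or.inr (h'.trans Set.subset_union_right))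
            · exact Or.inl (inter_empty_comm (inter_union_empty h h'))
      · by_cases h2 : X2 = s2
        · subst h2
          rw [hC2, hCn X1 h1]
          rcases hinv.content_root X1 hX1 X2 hmem_s2 with h | h
          · exact Or.inr (Or.inl (h.trans Set.subset_union_left))
          · rcases hinv.content_root X1 hX1 s1 hmem_s1 with h' | h'
            · exact Or.inr (Or.inl (h'.trans Set.subset_union_right))
            · exact Or.inl (inter_union_empty h h')
        · rw [hCn X1 h1, hCn X2 h2]
          exact hinv.lam X1 hX1 X2 hX2


end StepLemma
lemma inv_of_reachable {n : ℕ} {L : Type*} {conj : L} {c : Config n L}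
    (h : Reachable conj c) : BHInv c := by
  induction h with
  | refl => exact inv_init
  | tail _ hstep ih => exact inv_step ih hstep

/-- **(No-partial-overlap invariant)** In every reachable configuration, the
contents of any two bubbles are either disjoint or one contains the other. -/
theorem noPartialOverlap_invariant (n : ℕ) (L : Type*) [Fintype L] (conj : L)
    (c : Config n L) (hreach : Reachable conj c) :
    ∀ α1 ∈ c.bubbles, ∀ α2 ∈ c.bubbles,
      c.content α1 ∩ c.content α2 = ∅ ∨
      c.content α1 ⊆ c.content α2 ∨
      c.content α2 ⊆ c.content α1 :=
  (inv_of_reachable hreach).lam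
end

section
/- (Continuous-coverage invariant) For every sentence W = w_1, …, w_n and every reachable configuration (σ, β, B, φ, A, O) of the Bubble-Hybrid transition system for W, every bubble's content is a contiguous set of words: for every α ∈ B and all indices i < k < j, if w_i ∈ φ(α) and w_j ∈ φ(α) then w_k ∈ φ(α). -/
namespace CCAux

open Relation

variable {n : ℕ} {L : Type*}

lemma rtg_mono {arcs arcs' : Set (ℕ × L × ℕ)} (h : arcs ⊆ arcs') {a b : ℕ}
    (hab : ReflTransGen (ArcRel arcs) a b) : ReflTransGen (ArcRel arcs') a b :=
  ReflTransGen.mono (r := ArcRel arcs) (p := ArcRel arcs') (fun _ _ ⟨l, hl⟩ => ⟨l, h hl⟩) _ _ hab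

lemma rtg_insert {arcs : Set (ℕ × L × ℕ)} {s t : ℕ} {lb : L}
    (hts : ¬ ReflTransGen (ArcRel arcs) t s) {a b : ℕ}
    (h : ReflTransGen (ArcRel (insert (s, lb, t) arcs)) a b) :
    ReflTransGen (ArcRel arcs) a b ∨
      (ReflTransGen (ArcRel arcs) a s ∧ ReflTransGen (ArcRel arcs) t b) := by
  induction h with
  | refl => exact Or.inl .refl
  | @tail x y hax hxy ih =>
    obtain ⟨l', hl'⟩ := hxy
    rcases Set.mem_insert_iff.mp hl' with heq | hmem
    · obtain ⟨rfl, rfl, rfl⟩ : x = s ∧ l' = lb ∧ y = t := by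
        simpa [Prod.ext_iff] using heq
      rcases ih with h | ⟨h1, h2⟩
      · exact Or.inr ⟨h, .refl⟩
      · exact absurd h2 hts
    · rcases ih with h | ⟨h1, h2⟩
      · exact Or.inl (h.tail ⟨l', hmem⟩)
      · exact Or.inr ⟨h1, h2.tail ⟨l', hmem⟩⟩

lemma self_subset_projOf {arcs : Set (ℕ × L × ℕ)} {φ : ℕ → Set (BNode n)} {a : ℕ} :
    φ a ⊆ projOf arcs φ a := fun v hv => ⟨a, .refl, hv⟩

lemma projOf_mono_rtg {arcs : Set (ℕ × L × ℕ)} {φ : ℕ → Set (BNode n)} {a b : ℕ}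
    (h : ReflTransGen (ArcRel arcs) a b) : projOf arcs φ b ⊆ projOf arcs φ a :=
  fun v ⟨c', hc', hv⟩ => ⟨c', h.trans hc', hv⟩

lemma projOf_congr {arcs : Set (ℕ × L × ℕ)} {φ φ' : ℕ → Set (BNode n)} {a : ℕ}
    (h : ∀ x, ReflTransGen (ArcRel arcs) a x → φ' x = φ x) :
    projOf arcs φ' a = projOf arcs φ a := by
  ext v
  constructor
  · rintro ⟨b, hb, hv⟩; exact ⟨b, hb, (h b hb) ▸ hv⟩
  · rintro ⟨b, hb, hv⟩; exact ⟨b, hb, (h b hb).symm ▸ hv⟩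

lemma projOf_eq_self {arcs : Set (ℕ × L × ℕ)} {φ : ℕ → Set (BNode n)} {a : ℕ}
    (h : ∀ x, ReflTransGen (ArcRel arcs) a x → x = a) :
    projOf arcs φ a = φ a := by
  ext v
  constructor
  · rintro ⟨b, hb, hv⟩; exact (h b hb) ▸ hv
  · intro hv; exact ⟨a, .refl, hv⟩

lemma no_rtg_to {arcs : Set (ℕ × L × ℕ)} {z : ℕ}
    (hno : ∀ p lb, (p, lb, z) ∉ arcs) {x : ℕ}
    (h : ReflTransGen (ArcRel arcs) x z) : x = z := by
  rcases h.cases_tail with h | ⟨c', _, lb, hc'⟩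
  · exact h.symm
  · exact absurd hc' (hno c' lb)

lemma no_rtg_from {arcs : Set (ℕ × L × ℕ)} {z : ℕ}
    (hno : ∀ lb q, (z, lb, q) ∉ arcs) {x : ℕ}
    (h : ReflTransGen (ArcRel arcs) z x) : x = z := by
  rcases h.cases_head with h | ⟨c', ⟨lb, hc'⟩, _⟩
  · exact h.symm
  · exact absurd hc' (hno lb c')

lemma proj_insert_other {arcs : Set (ℕ × L × ℕ)} {φ φ' : ℕ → Set (BNode n)}
    {s t a : ℕ} {lb : L}
    (hts : ¬ ReflTransGen (ArcRel arcs) t s)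
    (has : ¬ ReflTransGen (ArcRel arcs) a s)
    (hφ : ∀ x, ReflTransGen (ArcRel arcs) a x → φ' x = φ x) :
    projOf (insert (s, lb, t) arcs) φ' a = projOf arcs φ a := by
  ext v
  constructor
  · rintro ⟨b, hb, hv⟩
    rcases rtg_insert hts hb with h | ⟨h1, _⟩
    · exact ⟨b, h, (hφ b h) ▸ hv⟩
    · exact absurd h1 has
  · rintro ⟨b, hb, hv⟩
    exact ⟨b, rtg_mono (Set.subset_insert _ _) hb, (hφ b hb).symm ▸ hv⟩

lemma proj_insert_src {arcs : Set (ℕ × L × ℕ)} {φ φ' : ℕ → Set (BNode n)}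
    {s t : ℕ} {lb : L}
    (hts : ¬ ReflTransGen (ArcRel arcs) t s)
    (hφt : ∀ x, ReflTransGen (ArcRel arcs) t x → φ' x = φ x)
    (hφs : ∀ x, ReflTransGen (ArcRel arcs) s x → x ≠ s → φ' x = φ x)
    (h1 : φ' s ⊆ projOf arcs φ s ∪ projOf arcs φ t)
    (h2 : φ s ⊆ φ' s) :
    projOf (insert (s, lb, t) arcs) φ' s = projOf arcs φ s ∪ projOf arcs φ t := by
  ext v
  constructor
  · rintro ⟨b, hb, hv⟩
    rcases rtg_insert hts hb with h | ⟨_, h2'⟩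
    · by_cases hbs : b = s
      · subst hbs; exact h1 hv
      · exact Or.inl ⟨b, h, (hφs b h hbs) ▸ hv⟩
    · exact Or.inr ⟨b, h2', (hφt b h2') ▸ hv⟩
  · rintro (⟨b, hb, hv⟩ | ⟨b, hb, hv⟩)
    · by_cases hbs : b = s
      · exact ⟨s, .refl, h2 (hbs ▸ hv)⟩
      · exact ⟨b, rtg_mono (Set.subset_insert _ _) hb, (hφs b hb hbs).symm ▸ hv⟩
    · exact ⟨b, .head ⟨lb, Set.mem_insert _ _⟩ (rtg_mono (Set.subset_insert _ _) hb),
        (hφt b hb).symm ▸ hv⟩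

end CCAux

namespace CCAux

open Relation

variable {n : ℕ} {L : Type*}

/-- `Spans f a l b`: the word-contents of the elements of `l`, under `f`, are the
consecutive intervals `[a, m₁), [m₁, m₂), …` ending at `b`. -/
def Spans (f : ℕ → Set (BNode n)) : ℕ → List ℕ → ℕ → Prop
  | a, [], b => a = b
  | a, x :: xs, b => ∃ m, a ≤ m ∧
      (∀ k : Fin n, some k ∈ f x ↔ a ≤ (k : ℕ) ∧ (k : ℕ) < m) ∧ Spans f m xs b

lemma Spans_le {f : ℕ → Set (BNode n)} :
    ∀ {l : List ℕ} {a b : ℕ}, Spans f a l b → a ≤ b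
  | [], _, _, h => h.le
  | _ :: _, _, _, ⟨_, ham, _, hs⟩ => le_trans ham (Spans_le hs)

lemma Spans_mem_bound {f : ℕ → Set (BNode n)} {k : Fin n} :
    ∀ {l : List ℕ} {a b x : ℕ}, Spans f a l b → x ∈ l → some k ∈ f x →
      a ≤ (k : ℕ) ∧ (k : ℕ) < b
  | [], _, _, _, _, hx, _ => absurd hx List.not_mem_nil
  | y :: ys, a, b, x, ⟨m, ham, hchar, hs⟩, hx, hk => by
    rcases List.mem_cons.mp hx with rfl | hx
    · have h := (hchar k).mp hk
      exact ⟨h.1, lt_of_lt_of_le h.2 (Spans_le hs)⟩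
    · have h := Spans_mem_bound hs hx hk
      exact ⟨le_trans ham h.1, h.2⟩

lemma Spans_disjoint {f : ℕ → Set (BNode n)} {k : Fin n} :
    ∀ {l : List ℕ} {a b x y : ℕ}, Spans f a l b → x ∈ l → y ∈ l → x ≠ y →
      some k ∈ f x → some k ∈ f y → False
  | [], _, _, _, _, _, hx, _, _, _, _ => absurd hx List.not_mem_nil
  | z :: zs, a, b, x, y, ⟨m, _, hchar, hs⟩, hx, hy, hxy, hkx, hky => by
    rcases List.mem_cons.mp hx with rfl | hx'
    · rcases List.mem_cons.mp hy with rfl | hy'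
      · exact hxy rfl
      · have h1 := (hchar k).mp hkx
        have h2 := Spans_mem_bound hs hy' hky
        omega
    · rcases List.mem_cons.mp hy with rfl | hy'
      · have h1 := (hchar k).mp hky
        have h2 := Spans_mem_bound hs hx' hkx
        omega
      · exact Spans_disjoint hs hx' hy' hxy hkx hky

lemma Spans_congr {f f' : ℕ → Set (BNode n)} :
    ∀ {l : List ℕ} {a b : ℕ},
      (∀ x ∈ l, ∀ k : Fin n, some k ∈ f' x ↔ some k ∈ f x) → Spans f a l b →
      Spans f' a l b
  | [], _, _, _, h => h
  | x :: xs, a, b, hcong, ⟨m, ham, hchar, hs⟩ =>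
    ⟨m, ham, fun k => (hcong x (List.mem_cons_self) k).trans (hchar k),
      Spans_congr (fun y hy => hcong y (List.mem_cons_of_mem x hy)) hs⟩

lemma Spans_pair {f : ℕ → Set (BNode n)} :
    ∀ {pre : List ℕ} {a b u v : ℕ} {post : List ℕ},
      Spans f a (pre ++ u :: v :: post) b →
      ∃ x y z : ℕ, x ≤ y ∧ y ≤ z ∧
        (∀ k : Fin n, some k ∈ f u ↔ x ≤ (k : ℕ) ∧ (k : ℕ) < y) ∧
        (∀ k : Fin n, some k ∈ f v ↔ y ≤ (k : ℕ) ∧ (k : ℕ) < z)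
  | [], a, b, u, v, post, ⟨m, ham, hcu, m2, hm2, hcv, _⟩ =>
    ⟨a, m, m2, ham, hm2, hcu, hcv⟩
  | p :: pre, a, b, u, v, post, ⟨m, _, _, hs⟩ => Spans_pair hs

lemma Spans_merge {f f' : ℕ → Set (BNode n)} {w : ℕ} :
    ∀ {pre : List ℕ} {a b u v : ℕ} {post : List ℕ},
      Spans f a (pre ++ u :: v :: post) b →
      (∀ x ∈ pre, ∀ k : Fin n, some k ∈ f' x ↔ some k ∈ f x) →
      (∀ x ∈ post, ∀ k : Fin n, some k ∈ f' x ↔ some k ∈ f x) →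
      (∀ k : Fin n, some k ∈ f' w ↔ (some k ∈ f u ∨ some k ∈ f v)) →
      Spans f' a (pre ++ w :: post) b
  | [], a, b, u, v, post, ⟨m, ham, hcu, m2, hm2, hcv, hs⟩, _, hpost, hw =>
    ⟨m2, le_trans ham hm2, fun k => by
        rw [hw k, hcu k, hcv k]; omega,
      Spans_congr hpost hs⟩
  | p :: pre, a, b, u, v, post, ⟨m, ham, hcp, hs⟩, hpre, hpost, hw =>
    ⟨m, ham, fun k => (hpre p (List.mem_cons_self) k).trans (hcp k),
      Spans_merge hs (fun x hx => hpre x (List.mem_cons_of_mem p hx)) hpost hw⟩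

lemma contig_union {S T : Set (BNode n)} {x y z : ℕ} (hxy : x ≤ y) (hyz : y ≤ z)
    (hS : ∀ k : Fin n, some k ∈ S ↔ x ≤ (k : ℕ) ∧ (k : ℕ) < y)
    (hT : ∀ k : Fin n, some k ∈ T ↔ y ≤ (k : ℕ) ∧ (k : ℕ) < z)
    {i j k : Fin n} (hik : i < k) (hkj : k < j)
    (hi : some i ∈ S ∪ T) (hj : some j ∈ S ∪ T) : some k ∈ S ∪ T := by
  have hik' : (i : ℕ) < (k : ℕ) := hik
  have hkj' : (k : ℕ) < (j : ℕ) := hkj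
  have hxi : x ≤ (i : ℕ) := by
    rcases hi with h | h
    · exact ((hS i).mp h).1
    · have := (hT i).mp h; omega
  have hjz : (j : ℕ) < z := by
    rcases hj with h | h
    · have := (hS j).mp h; omega
    · exact ((hT j).mp h).2
  by_cases hky : (k : ℕ) < y
  · exact Or.inl ((hS k).mpr ⟨by omega, hky⟩)
  · exact Or.inr ((hT k).mpr ⟨by omega, by omega⟩)

end CCAux

namespace CCAux

open Relation

variable {n : ℕ} {L : Type*}

def Items (c : Config n L) : List ℕ := c.stack.reverse ++ c.buffer

/-- The strengthened invariant. -/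
structure Inv (c : Config n L) : Prop where
  hstk : ∃ σ', c.stack = σ' ++ [0]
  hnodup : (Items c).Nodup
  hsub : ∀ x ∈ Items c, x ∈ c.bubbles
  hc0 : c.content 0 = {(none : BNode n)}
  hnone : ∀ β, (none : BNode n) ∈ c.content β → β = 0
  hno0 : ∀ p lb, (p, lb, (0 : ℕ)) ∉ c.arcs
  harc : ∀ p lb q, (p, lb, q) ∈ c.arcs → p ∈ c.bubbles ∧ q ∈ c.bubbles
  hOstk : ∀ a ∈ c.openB, a ∈ c.stack
  hO0 : 0 ∉ c.openB
  hOproj : ∀ a ∈ c.openB, projOf c.arcs c.content a ⊆ c.content a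
  hne : ∀ b ∈ c.bubbles, (c.content b).Nonempty
  hcont : ∀ b, ∀ i j k : Fin n, i < k → k < j → some i ∈ c.content b →
    some j ∈ c.content b → some k ∈ c.content b
  hint : ∃ a b : ℕ, Spans (projOf c.arcs c.content) a (Items c) b

lemma zero_mem_items {c : Config n L} (hinv : Inv c) : 0 ∈ Items c := by
  obtain ⟨σ', h⟩ := hinv.hstk
  simp [Items, h]

lemma mem_stack_items {c : Config n L} {x : ℕ} (h : x ∈ c.stack) : x ∈ Items c := by
  simp [Items, h]

lemma Inv.reach_eq {c : Config n L} (hinv : Inv c) {a b : ℕ} (ha : a ∈ Items c)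
    (hb : b ∈ Items c) (hab : ReflTransGen (ArcRel c.arcs) a b) : a = b := by
  by_contra hne'
  by_cases hb0 : b = 0
  · subst hb0
    rcases hab.cases_tail with h | ⟨x, _, lb, hx⟩
    · exact hne' h.symm
    · exact hinv.hno0 x lb hx
  · obtain ⟨v, hv⟩ := hinv.hne b (hinv.hsub b hb)
    match v, hv with
    | none, hv => exact hb0 (hinv.hnone b hv)
    | some k, hv =>
      have hkb : some k ∈ projOf c.arcs c.content b := self_subset_projOf hv
      have hka : some k ∈ projOf c.arcs c.content a := projOf_mono_rtg hab hkb
      obtain ⟨a0, b0, hsp⟩ := hinv.hint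
      exact Spans_disjoint hsp ha hb hne' hka hkb

lemma Inv.not_reach {c : Config n L} (hinv : Inv c) {x y : ℕ} (hx : x ∈ Items c)
    (hy : y ∈ Items c) (hxy : x ≠ y) : ¬ ReflTransGen (ArcRel c.arcs) x y :=
  fun h => hxy (hinv.reach_eq hx hy h)

lemma stack_pop {x : ℕ} {σ σ' : List ℕ} (h : x :: σ = σ' ++ [0]) (hx : x ≠ 0) :
    ∃ σ'', σ = σ'' ++ [0] := by
  cases σ' with
  | nil => simp at h; exact absurd h.1 hx
  | cons y t =>
    simp only [List.cons_append, List.cons.injEq] at h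
    exact ⟨t, h.2⟩

lemma Inv.stack_nodup {c : Config n L} (hinv : Inv c) : c.stack.Nodup := by
  have h := hinv.hnodup
  rw [Items, List.nodup_append] at h
  exact List.nodup_reverse.mp h.1

lemma Inv.head_ne {c : Config n L} (hinv : Inv c) {x y : ℕ} {σ : List ℕ}
    (h : c.stack = x :: y :: σ) : x ≠ 0 := by
  obtain ⟨σ', hs⟩ := hinv.hstk
  have hnd := hinv.stack_nodup
  rw [h] at hs hnd
  rintro rfl
  cases σ' with
  | nil => simp at hs
  | cons z t =>
    simp only [List.cons_append, List.cons.injEq] at hs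
    have h0 : (0 : ℕ) ∈ y :: σ := by rw [hs.2]; simp
    exact (List.nodup_cons.mp hnd).1 h0

lemma nodup_facts {pre post : List ℕ} {u v : ℕ} (h : (pre ++ u :: v :: post).Nodup) :
    u ≠ v ∧ (∀ x ∈ pre, x ≠ u ∧ x ≠ v) ∧ (∀ x ∈ post, x ≠ u ∧ x ≠ v) := by
  rw [List.nodup_append] at h
  obtain ⟨hpre, hcons, hdisj⟩ := h
  rw [List.nodup_cons] at hcons
  obtain ⟨hu, hcons2⟩ := hcons
  rw [List.nodup_cons] at hcons2
  obtain ⟨hv, _⟩ := hcons2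
  refine ⟨fun h' => hu (by rw [h']; simp), ?_, ?_⟩
  · intro x hx
    exact ⟨fun h' => hdisj x hx u (by simp) h',
      fun h' => hdisj x hx v (by simp) h'⟩
  · intro x hx
    exact ⟨fun h' => hu (by rw [← h']; exact List.mem_cons_of_mem v hx),
      fun h' => hv (h' ▸ hx)⟩
end CCAux

namespace CCAux

open Relation

variable {n : ℕ} {L : Type*}

lemma rtg_empty {a b : ℕ} (h : ReflTransGen (ArcRel (∅ : Set (ℕ × L × ℕ))) a b) :
    a = b := by
  rcases h.cases_head with h | ⟨c', ⟨lb, hc'⟩, _⟩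
  · exact h
  · exact absurd hc' (Set.notMem_empty _)

lemma projOf_empty (φ : ℕ → Set (BNode n)) (a : ℕ) :
    projOf (∅ : Set (ℕ × L × ℕ)) φ a = φ a := by
  apply projOf_eq_self
  intro x hx
  exact (rtg_empty hx).symm

lemma init_spans_aux (f : ℕ → Set (BNode n))
    (hf : ∀ (x : ℕ) (k : Fin n), some k ∈ f x ↔ x = (k : ℕ) + 1) :
    ∀ (cnt a : ℕ), Spans f a (List.range' (a + 1) cnt) (a + cnt)
  | 0, a => by simp [Spans]
  | cnt + 1, a => by
    rw [List.range'_succ]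
    refine ⟨a + 1, Nat.le_succ a, ?_, ?_⟩
    · intro k; rw [hf]; omega
    · have h := init_spans_aux f hf cnt (a + 1)
      have : a + (cnt + 1) = (a + 1) + cnt := by omega
      rw [this]
      simpa using h

theorem inv_init : Inv (initConfig n L) := by
  have hitems : Items (initConfig n L) = 0 :: List.range' 1 n := by
    simp only [Items, initConfig]
    rw [List.range'_eq_map_range]
    simp [add_comm]
  have hproj : ∀ a, projOf (initConfig n L).arcs (initConfig n L).content a =
      (initConfig n L).content a := fun a => projOf_empty _ a
  constructor
  case hstk => exact ⟨[], rfl⟩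
  case hnodup =>
    rw [hitems]
    refine List.nodup_cons.mpr ⟨?_, ?_⟩
    · intro h
      have := List.mem_range'_1.mp h
      omega
    · exact List.nodup_range'
  case hsub =>
    intro x hx
    rw [hitems] at hx
    rcases List.mem_cons.mp hx with rfl | hx
    · simp [initConfig]
    · have := List.mem_range'_1.mp hx
      simp only [initConfig, Finset.mem_range]
      omega
  case hc0 =>
    ext v
    simp [initConfig]
  case hnone =>
    intro b hb
    simp only [initConfig, Set.mem_setOf_eq] at hb
    rcases hb with ⟨h, _⟩ | ⟨k, _, hk⟩
    · exact h
    · exact absurd hk (by simp)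
  case hno0 => intro p lb h; exact absurd h (Set.notMem_empty _)
  case harc => intro p lb q h; exact absurd h (Set.notMem_empty _)
  case hOstk => intro a ha; exact absurd ha (by simp [initConfig])
  case hO0 => simp [initConfig]
  case hOproj => intro a ha; exact absurd ha (by simp [initConfig])
  case hne =>
    intro b hb
    simp only [initConfig, Finset.mem_range] at hb
    match b with
    | 0 => exact ⟨none, by simp [initConfig]⟩
    | m + 1 =>
      refine ⟨some ⟨m, by omega⟩, ?_⟩
      simp only [initConfig, Set.mem_setOf_eq]
      exact Or.inr ⟨⟨m, by omega⟩, by simp⟩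
  case hcont =>
    intro b i j k hik hkj hi hj
    simp only [initConfig, Set.mem_setOf_eq] at hi hj
    rcases hi with ⟨_, h⟩ | ⟨k1, hb1, hk1⟩
    · exact absurd h (by simp)
    rcases hj with ⟨_, h⟩ | ⟨k2, hb2, hk2⟩
    · exact absurd h (by simp)
    have h1 : i = k1 := by simpa using hk1
    have h2 : j = k2 := by simpa using hk2
    have : (k1 : ℕ) = (k2 : ℕ) := by omega
    have hik' : (i : ℕ) < (k : ℕ) := hik
    have hkj' : (k : ℕ) < (j : ℕ) := hkj
    subst h1 h2
    omega
  case hint =>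
    refine ⟨0, n, ?_⟩
    rw [hitems]
    have hf : ∀ (x : ℕ) (k : Fin n),
        some k ∈ projOf (initConfig n L).arcs (initConfig n L).content x ↔
          x = (k : ℕ) + 1 := by
      intro x k
      rw [hproj]
      simp only [initConfig, Set.mem_setOf_eq]
      constructor
      · rintro (⟨_, h⟩ | ⟨k', hx, hk'⟩)
        · exact absurd h (by simp)
        · have : k = k' := by simpa using hk'
          rw [this]; exact hx
      · intro h
        exact Or.inr ⟨k, h, rfl⟩
    refine ⟨0, le_rfl, ?_, ?_⟩
    · intro k
      rw [hf]
      omega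
    · have := init_spans_aux _ hf n 0
      simpa using this

end CCAux

namespace CCAux

open Relation

variable {n : ℕ} {L : Type*}

lemma Inv.none_notin_proj {c : Config n L} (hinv : Inv c) {x : ℕ} (hx : x ∈ Items c)
    (hx0 : x ≠ 0) : (none : BNode n) ∉ projOf c.arcs c.content x := by
  rintro ⟨y, hy, hv⟩
  exact hx0 (hinv.reach_eq hx (zero_mem_items hinv) ((hinv.hnone y hv) ▸ hy))

lemma contig_from_pair {f : ℕ → Set (BNode n)} {a0 b0 u v : ℕ} {pre post : List ℕ}
    (hsp : Spans f a0 (pre ++ u :: v :: post) b0) :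
    ∀ i j k : Fin n, i < k → k < j → some i ∈ f u ∪ f v → some j ∈ f u ∪ f v →
      some k ∈ f u ∪ f v := by
  obtain ⟨x, y, z, hxy, hyz, hcu, hcv⟩ := Spans_pair hsp
  exact fun i j k hik hkj hi hj => contig_union hxy hyz hcu hcv hik hkj hi hj

theorem inv_step {conj : L} {c c' : Config n L} (hinv : Inv c)
    (hstep : Step conj c c') : Inv c' := by
  cases hstep with
  | shift b1 β hbuf =>
    have hIt : Items { c with stack := b1 :: c.stack, buffer := β } = Items c := by
      simp [Items, hbuf]
    constructor
    case hstk =>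
      obtain ⟨σ', h⟩ := hinv.hstk
      exact ⟨b1 :: σ', by rw [h]; rfl⟩
    case hnodup => rw [hIt]; exact hinv.hnodup
    case hsub => intro x hx; rw [hIt] at hx; exact hinv.hsub x hx
    case hc0 => exact hinv.hc0
    case hnone => exact hinv.hnone
    case hno0 => exact hinv.hno0
    case harc => exact hinv.harc
    case hOstk => intro a ha; exact List.mem_cons_of_mem _ (hinv.hOstk a ha)
    case hO0 => exact hinv.hO0
    case hOproj => exact hinv.hOproj
    case hne => exact hinv.hne
    case hcont => exact hinv.hcont
    case hint => rw [hIt]; exact hinv.hint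
  | bubbleClose s1 σ hstk hs1 =>
    have hIt :
        Items { c with stack := σ, buffer := s1 :: c.buffer, openB := c.openB.erase s1 }
          = Items c := by
      simp [Items, hstk]
    have hs10 : s1 ≠ 0 := fun h => hinv.hO0 (h ▸ hs1)
    constructor
    case hstk =>
      obtain ⟨σ', h⟩ := hinv.hstk
      rw [hstk] at h
      exact stack_pop h hs10
    case hnodup => rw [hIt]; exact hinv.hnodup
    case hsub => intro x hx; rw [hIt] at hx; exact hinv.hsub x hx
    case hc0 => exact hinv.hc0
    case hnone => exact hinv.hnone
    case hno0 => exact hinv.hno0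
    case harc => exact hinv.harc
    case hOstk =>
      intro a ha
      have ha' := Finset.mem_erase.mp ha
      have h := hinv.hOstk a ha'.2
      rw [hstk] at h
      rcases List.mem_cons.mp h with rfl | h
      · exact absurd rfl ha'.1
      · exact h
    case hO0 => intro h; exact hinv.hO0 (Finset.mem_erase.mp h).2
    case hOproj => intro a ha; exact hinv.hOproj a (Finset.mem_erase.mp ha).2
    case hne => exact hinv.hne
    case hcont => exact hinv.hcont
    case hint => rw [hIt]; exact hinv.hint
  | leftArc lbl s1 σ b1 β hstk hbuf hs1 hb1 hroot =>
    have hItc : Items c = σ.reverse ++ s1 :: b1 :: β := by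
      simp [Items, hstk, hbuf]
    have hItc' : Items { c with stack := σ, arcs := insert (b1, lbl, s1) c.arcs }
        = σ.reverse ++ b1 :: β := by
      simp [Items, hbuf]
    have hnd := hinv.hnodup
    rw [hItc] at hnd
    obtain ⟨huv, hprene, hpostne⟩ := nodup_facts hnd
    have hs1m : s1 ∈ Items c := by rw [hItc]; simp
    have hb1m : b1 ∈ Items c := by rw [hItc]; simp
    have hs10 : s1 ≠ 0 := fun h => hroot (by rw [h]; exact hinv.hc0)
    have hts : ¬ ReflTransGen (ArcRel c.arcs) s1 b1 := hinv.not_reach hs1m hb1m huv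
    have hproj_other : ∀ x, x ∈ Items c → x ≠ b1 →
        projOf (insert (b1, lbl, s1) c.arcs) c.content x
          = projOf c.arcs c.content x :=
      fun x hx hxb =>
        proj_insert_other hts (hinv.not_reach hx hb1m hxb) (fun _ _ => rfl)
    have hproj_b1 : projOf (insert (b1, lbl, s1) c.arcs) c.content b1
        = projOf c.arcs c.content b1 ∪ projOf c.arcs c.content s1 :=
      proj_insert_src hts (fun _ _ => rfl) (fun _ _ _ => rfl)
        (fun v hv => Or.inl (self_subset_projOf hv)) subset_rfl
    constructor
    case hstk =>
      obtain ⟨σ', h⟩ := hinv.hstk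
      rw [hstk] at h
      exact stack_pop h hs10
    case hnodup =>
      rw [hItc']
      have hsl : (σ.reverse ++ b1 :: β).Sublist (σ.reverse ++ s1 :: b1 :: β) :=
        List.Sublist.append_left (List.sublist_cons_self _ _) _
      exact hsl.nodup (hItc ▸ hinv.hnodup)
    case hsub =>
      intro x hx
      rw [hItc'] at hx
      apply hinv.hsub
      rw [hItc]
      rcases List.mem_append.mp hx with h | h
      · exact List.mem_append.mpr (Or.inl h)
      · exact List.mem_append.mpr (Or.inr (List.mem_cons_of_mem _ h))
    case hc0 => exact hinv.hc0
    case hnone => exact hinv.hnone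
    case hno0 =>
      intro p lb h
      rcases Set.mem_insert_iff.mp h with heq | hmem
      · obtain ⟨_, _, h3⟩ : p = b1 ∧ lb = lbl ∧ (0 : ℕ) = s1 := by
          simpa [Prod.ext_iff] using heq
        exact hs10 h3.symm
      · exact hinv.hno0 p lb hmem
    case harc =>
      intro p lb q h
      rcases Set.mem_insert_iff.mp h with heq | hmem
      · obtain ⟨rfl, _, rfl⟩ : p = b1 ∧ lb = lbl ∧ q = s1 := by
          simpa [Prod.ext_iff] using heq
        exact ⟨hinv.hsub _ hb1m, hinv.hsub _ hs1m⟩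
      · exact hinv.harc p lb q hmem
    case hOstk =>
      intro a ha
      have h := hinv.hOstk a ha
      rw [hstk] at h
      rcases List.mem_cons.mp h with rfl | h
      · exact absurd ha hs1
      · exact h
    case hO0 => exact hinv.hO0
    case hOproj =>
      intro a ha
      have ham : a ∈ Items c := mem_stack_items (hinv.hOstk a ha)
      have hab1 : a ≠ b1 := fun h => hb1 (h ▸ ha)
      show projOf (insert (b1, lbl, s1) c.arcs) c.content a ⊆ c.content a
      rw [hproj_other a ham hab1]
      exact hinv.hOproj a ha
    case hne => exact hinv.hne
    case hcont => exact hinv.hcont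
    case hint =>
      obtain ⟨a0, b0, hsp⟩ := hinv.hint
      rw [hItc] at hsp
      refine ⟨a0, b0, ?_⟩
      rw [hItc']
      apply Spans_merge hsp
      · intro x hx k
        rw [hproj_other x (by rw [hItc]; simp [hx]) (hprene x hx).2]
      · intro x hx k
        rw [hproj_other x (by rw [hItc]; simp [hx]) (hpostne x hx).2]
      · intro k
        rw [hproj_b1]
        exact or_comm
  | rightArc lbl s1 s2 σ hstk hs1 hs2 =>
    have hItc : Items c = σ.reverse ++ s2 :: s1 :: c.buffer := by
      simp [Items, hstk]
    have hItc' : Items { c with stack := s2 :: σ, arcs := insert (s2, lbl, s1) c.arcs }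
        = σ.reverse ++ s2 :: c.buffer := by
      simp [Items]
    have hnd := hinv.hnodup
    rw [hItc] at hnd
    obtain ⟨huv, hprene, hpostne⟩ := nodup_facts hnd
    have hs1m : s1 ∈ Items c := by rw [hItc]; simp
    have hs2m : s2 ∈ Items c := by rw [hItc]; simp
    have hs10 : s1 ≠ 0 := hinv.head_ne hstk
    have hts : ¬ ReflTransGen (ArcRel c.arcs) s1 s2 :=
      hinv.not_reach hs1m hs2m (Ne.symm huv)
    have hproj_other : ∀ x, x ∈ Items c → x ≠ s2 →
        projOf (insert (s2, lbl, s1) c.arcs) c.content x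
          = projOf c.arcs c.content x :=
      fun x hx hxb =>
        proj_insert_other hts (hinv.not_reach hx hs2m hxb) (fun _ _ => rfl)
    have hproj_s2 : projOf (insert (s2, lbl, s1) c.arcs) c.content s2
        = projOf c.arcs c.content s2 ∪ projOf c.arcs c.content s1 :=
      proj_insert_src hts (fun _ _ => rfl) (fun _ _ _ => rfl)
        (fun v hv => Or.inl (self_subset_projOf hv)) subset_rfl
    constructor
    case hstk =>
      obtain ⟨σ', h⟩ := hinv.hstk
      rw [hstk] at h
      exact stack_pop h hs10
    case hnodup =>
      rw [hItc']
      have hsl : (σ.reverse ++ s2 :: c.buffer).Sublist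
          (σ.reverse ++ s2 :: s1 :: c.buffer) :=
        List.Sublist.append_left ((List.sublist_cons_self _ _).cons_cons _) _
      exact hsl.nodup (hItc ▸ hinv.hnodup)
    case hsub =>
      intro x hx
      rw [hItc'] at hx
      apply hinv.hsub
      rw [hItc]
      rcases List.mem_append.mp hx with h | h
      · exact List.mem_append.mpr (Or.inl h)
      · rcases List.mem_cons.mp h with rfl | h
        · exact List.mem_append.mpr (Or.inr (List.mem_cons_self))
        · exact List.mem_append.mpr
            (Or.inr (List.mem_cons_of_mem _ (List.mem_cons_of_mem _ h)))
    case hc0 => exact hinv.hc0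
    case hnone => exact hinv.hnone
    case hno0 =>
      intro p lb h
      rcases Set.mem_insert_iff.mp h with heq | hmem
      · obtain ⟨_, _, h3⟩ : p = s2 ∧ lb = lbl ∧ (0 : ℕ) = s1 := by
          simpa [Prod.ext_iff] using heq
        exact hs10 h3.symm
      · exact hinv.hno0 p lb hmem
    case harc =>
      intro p lb q h
      rcases Set.mem_insert_iff.mp h with heq | hmem
      · obtain ⟨rfl, _, rfl⟩ : p = s2 ∧ lb = lbl ∧ q = s1 := by
          simpa [Prod.ext_iff] using heq
        exact ⟨hinv.hsub _ hs2m, hinv.hsub _ hs1m⟩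
      · exact hinv.harc p lb q hmem
    case hOstk =>
      intro a ha
      have h := hinv.hOstk a ha
      rw [hstk] at h
      rcases List.mem_cons.mp h with rfl | h
      · exact absurd ha hs1
      · exact h
    case hO0 => exact hinv.hO0
    case hOproj =>
      intro a ha
      have ham : a ∈ Items c := mem_stack_items (hinv.hOstk a ha)
      have has2 : a ≠ s2 := fun h => hs2 (h ▸ ha)
      show projOf (insert (s2, lbl, s1) c.arcs) c.content a ⊆ c.content a
      rw [hproj_other a ham has2]
      exact hinv.hOproj a ha
    case hne => exact hinv.hne
    case hcont => exact hinv.hcont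
    case hint =>
      obtain ⟨a0, b0, hsp⟩ := hinv.hint
      rw [hItc] at hsp
      refine ⟨a0, b0, ?_⟩
      rw [hItc']
      apply Spans_merge hsp
      · intro x hx k
        rw [hproj_other x (by rw [hItc]; simp [hx]) (hprene x hx).1]
      · intro x hx k
        rw [hproj_other x (by rw [hItc]; simp [hx]) (hpostne x hx).1]
      · intro k
        rw [hproj_s2]
        exact Iff.rfl
  | bubbleOpen lbl s1 s2 σ α hstk hs1 hs2 hroot hfresh =>
    have hItc : Items c = σ.reverse ++ s2 :: s1 :: c.buffer := by
      simp [Items, hstk]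
    have hItc' :
        Items { stack := α :: σ, buffer := c.buffer, bubbles := insert α c.bubbles, content := Function.update c.content α (c.proj s2 ∪ c.proj s1), arcs := insert (α, conj, s2) (insert (α, lbl, s1) c.arcs), openB := insert α c.openB } = σ.reverse ++ α :: c.buffer := by
      simp [Items]
    have hnd := hinv.hnodup
    rw [hItc] at hnd
    obtain ⟨huv, hprene, hpostne⟩ := nodup_facts hnd
    have hs1m : s1 ∈ Items c := by rw [hItc]; simp
    have hs2m : s2 ∈ Items c := by rw [hItc]; simp
    have hαI : α ∉ Items c := fun h => hfresh (hinv.hsub α h)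
    have hs1α : s1 ≠ α := fun h => hαI (h ▸ hs1m)
    have hs2α : s2 ≠ α := fun h => hαI (h ▸ hs2m)
    have hs10 : s1 ≠ 0 := hinv.head_ne hstk
    have hs20 : s2 ≠ 0 := fun h => hroot (by rw [h]; exact hinv.hc0)
    have hα0 : α ≠ 0 := fun h => hfresh (h ▸ hinv.hsub 0 (zero_mem_items hinv))
    have hnoin : ∀ p lb', (p, lb', α) ∉ c.arcs :=
      fun p lb' h => hfresh (hinv.harc p lb' α h).2
    have hnoout : ∀ lb' q, (α, lb', q) ∉ c.arcs :=
      fun lb' q h => hfresh (hinv.harc α lb' q h).1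
    have hto : ∀ x, ReflTransGen (ArcRel c.arcs) x α → x = α :=
      fun x h => no_rtg_to hnoin h
    have hfrom : ∀ x, ReflTransGen (ArcRel c.arcs) α x → x = α :=
      fun x h => no_rtg_from hnoout h
    have hnoin1 : ∀ p lb', (p, lb', α) ∉ insert (α, lbl, s1) c.arcs := by
      intro p lb' h
      rcases Set.mem_insert_iff.mp h with heq | hmem
      · obtain ⟨_, _, h3⟩ : p = α ∧ lb' = lbl ∧ α = s1 := by
          simpa [Prod.ext_iff] using heq
        exact hs1α h3.symm
      · exact hnoin p lb' hmem
    have hto1 : ∀ x, ReflTransGen (ArcRel (insert (α, lbl, s1) c.arcs)) x α → x = α :=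
      fun x h => no_rtg_to hnoin1 h
    have hts1 : ¬ ReflTransGen (ArcRel c.arcs) s1 α := fun h => hs1α (hto s1 h)
    have hts2 : ¬ ReflTransGen (ArcRel (insert (α, lbl, s1) c.arcs)) s2 α :=
      fun h => hs2α (hto1 s2 h)
    have hproj1 : ∀ x, x ∈ Items c →
        projOf (insert (α, lbl, s1) c.arcs)
            (Function.update c.content α (c.proj s2 ∪ c.proj s1)) x
          = projOf c.arcs c.content x := by
      intro x hx
      have hxα : x ≠ α := fun h => hαI (h ▸ hx)
      refine proj_insert_other hts1 (fun h => hxα (hto x h)) ?_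
      intro y hy
      exact Function.update_of_ne
        (fun h => hxα (hto x (by rw [h] at hy; exact hy))) _ _
    have hproj_other : ∀ x, x ∈ Items c →
        projOf (insert (α, conj, s2) (insert (α, lbl, s1) c.arcs))
            (Function.update c.content α (c.proj s2 ∪ c.proj s1)) x
          = projOf c.arcs c.content x := by
      intro x hx
      have hxα : x ≠ α := fun h => hαI (h ▸ hx)
      have h2 := proj_insert_other (lb := conj) (φ := Function.update c.content α (c.proj s2 ∪ c.proj s1))
        hts2 (fun h => hxα (hto1 x h)) (fun _ _ => rfl)
      rw [h2, hproj1 x hx]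
    have hudα : Function.update c.content α (c.proj s2 ∪ c.proj s1) α
        = c.proj s2 ∪ c.proj s1 := Function.update_self _ _ _
    have hprojα : projOf (insert (α, conj, s2) (insert (α, lbl, s1) c.arcs))
            (Function.update c.content α (c.proj s2 ∪ c.proj s1)) α
          = projOf c.arcs c.content s2 ∪ projOf c.arcs c.content s1 := by
      have houter : projOf (insert (α, conj, s2) (insert (α, lbl, s1) c.arcs))
              (Function.update c.content α (c.proj s2 ∪ c.proj s1)) α
            = projOf (insert (α, lbl, s1) c.arcs)
                (Function.update c.content α (c.proj s2 ∪ c.proj s1)) α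
              ∪ projOf (insert (α, lbl, s1) c.arcs)
                (Function.update c.content α (c.proj s2 ∪ c.proj s1)) s2 :=
        proj_insert_src hts2 (fun _ _ => rfl) (fun _ _ _ => rfl)
          (fun v hv => Or.inl (self_subset_projOf hv)) subset_rfl
      have hinner : projOf (insert (α, lbl, s1) c.arcs)
              (Function.update c.content α (c.proj s2 ∪ c.proj s1)) α
            = projOf c.arcs
                (Function.update c.content α (c.proj s2 ∪ c.proj s1)) α
              ∪ projOf c.arcs
                (Function.update c.content α (c.proj s2 ∪ c.proj s1)) s1 :=
        proj_insert_src hts1 (fun _ _ => rfl) (fun _ _ _ => rfl)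
          (fun v hv => Or.inl (self_subset_projOf hv)) subset_rfl
      have hbase : projOf c.arcs
          (Function.update c.content α (c.proj s2 ∪ c.proj s1)) α
            = c.proj s2 ∪ c.proj s1 := by
        rw [projOf_eq_self (fun x hx => hfrom x hx), hudα]
      have hs1base : projOf c.arcs
          (Function.update c.content α (c.proj s2 ∪ c.proj s1)) s1
            = projOf c.arcs c.content s1 := by
        refine projOf_congr ?_
        intro y hy
        exact Function.update_of_ne
          (fun h => hs1α (hto s1 (by rw [h] at hy; exact hy))) _ _
      rw [houter, hinner, hbase, hs1base, hproj1 s2 hs2m]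
      show (c.proj s2 ∪ c.proj s1) ∪ projOf c.arcs c.content s1 ∪ projOf c.arcs c.content s2 = _
      have e1 : c.proj s2 = projOf c.arcs c.content s2 := rfl
      have e2 : c.proj s1 = projOf c.arcs c.content s1 := rfl
      rw [e1, e2]
      ext v
      simp only [Set.mem_union]
      tauto
    constructor
    case hstk =>
      obtain ⟨σ', h⟩ := hinv.hstk
      rw [hstk] at h
      obtain ⟨σ'', h2⟩ := stack_pop h hs10
      obtain ⟨τ, h3⟩ := stack_pop h2 hs20
      exact ⟨α :: τ, by rw [h3]; rfl⟩
    case hnodup =>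
      rw [hItc']
      have hbase : (σ.reverse ++ c.buffer).Nodup := by
        have hsl : (σ.reverse ++ c.buffer).Sublist
            (σ.reverse ++ s2 :: s1 :: c.buffer) :=
          List.Sublist.append_left
            ((List.sublist_cons_self _ _).trans (List.sublist_cons_self _ _)) _
        exact hsl.nodup (hItc ▸ hinv.hnodup)
      have hαnm : α ∉ σ.reverse ++ c.buffer := by
        intro h
        apply hαI
        rw [hItc]
        rcases List.mem_append.mp h with h | h
        · exact List.mem_append.mpr (Or.inl h)
        · exact List.mem_append.mpr
            (Or.inr (List.mem_cons_of_mem _ (List.mem_cons_of_mem _ h)))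
      rw [List.nodup_middle]
      exact List.nodup_cons.mpr ⟨hαnm, hbase⟩
    case hsub =>
      intro x hx
      rw [hItc'] at hx
      rcases List.mem_append.mp hx with h | h
      · exact Finset.mem_insert_of_mem (hinv.hsub x (by rw [hItc]; simp [h]))
      · rcases List.mem_cons.mp h with rfl | h
        · exact Finset.mem_insert_self _ _
        · exact Finset.mem_insert_of_mem (hinv.hsub x (by rw [hItc]; simp [h]))
    case hc0 =>
      show Function.update c.content α (c.proj s2 ∪ c.proj s1) 0 = _
      rw [Function.update_of_ne (Ne.symm hα0)]
      exact hinv.hc0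
    case hnone =>
      intro b hb
      dsimp only at hb
      by_cases hbα : b = α
      · subst hbα
        rw [hudα] at hb
        rcases hb with hb | hb
        · exact absurd hb (hinv.none_notin_proj hs2m hs20)
        · exact absurd hb (hinv.none_notin_proj hs1m hs10)
      · rw [Function.update_of_ne hbα] at hb
        exact hinv.hnone b hb
    case hno0 =>
      intro p lb h
      rcases Set.mem_insert_iff.mp h with heq | h
      · obtain ⟨_, _, h3⟩ : p = α ∧ lb = conj ∧ (0 : ℕ) = s2 := by
          simpa [Prod.ext_iff] using heq
        exact hs20 h3.symm
      rcases Set.mem_insert_iff.mp h with heq | h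
      · obtain ⟨_, _, h3⟩ : p = α ∧ lb = lbl ∧ (0 : ℕ) = s1 := by
          simpa [Prod.ext_iff] using heq
        exact hs10 h3.symm
      · exact hinv.hno0 p lb h
    case harc =>
      intro p lb q h
      rcases Set.mem_insert_iff.mp h with heq | h
      · obtain ⟨rfl, _, rfl⟩ : p = α ∧ lb = conj ∧ q = s2 := by
          simpa [Prod.ext_iff] using heq
        exact ⟨Finset.mem_insert_self _ _,
          Finset.mem_insert_of_mem (hinv.hsub _ hs2m)⟩
      rcases Set.mem_insert_iff.mp h with heq | h
      · obtain ⟨rfl, _, rfl⟩ : p = α ∧ lb = lbl ∧ q = s1 := by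
          simpa [Prod.ext_iff] using heq
        exact ⟨Finset.mem_insert_self _ _,
          Finset.mem_insert_of_mem (hinv.hsub _ hs1m)⟩
      · have h2 := hinv.harc p lb q h
        exact ⟨Finset.mem_insert_of_mem h2.1, Finset.mem_insert_of_mem h2.2⟩
    case hOstk =>
      intro a ha
      rcases Finset.mem_insert.mp ha with rfl | ha2
      · exact List.mem_cons_self
      · have h := hinv.hOstk a ha2
        rw [hstk] at h
        rcases List.mem_cons.mp h with rfl | h
        · exact absurd ha2 hs1
        rcases List.mem_cons.mp h with rfl | h
        · exact absurd ha2 hs2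
        · exact List.mem_cons_of_mem _ h
    case hO0 =>
      intro h
      rcases Finset.mem_insert.mp h with h | h
      · exact hα0 h.symm
      · exact hinv.hO0 h
    case hOproj =>
      intro a ha
      rcases Finset.mem_insert.mp ha with rfl | ha
      · show projOf _ _ a ⊆ Function.update c.content a (c.proj s2 ∪ c.proj s1) a
        rw [hudα, hprojα]
        exact subset_rfl
      · have ham : a ∈ Items c := mem_stack_items (hinv.hOstk a ha)
        have haα : a ≠ α := fun h => hαI (h ▸ ham)
        show projOf _ _ a ⊆ Function.update c.content α (c.proj s2 ∪ c.proj s1) a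
        rw [hproj_other a ham, Function.update_of_ne haα]
        exact hinv.hOproj a ha
    case hne =>
      intro b hb
      dsimp only at hb ⊢
      by_cases hbα : b = α
      · subst hbα
        rw [hudα]
        obtain ⟨v, hv⟩ := hinv.hne s2 (hinv.hsub _ hs2m)
        exact ⟨v, Or.inl (self_subset_projOf hv)⟩
      · rw [Function.update_of_ne hbα]
        exact hinv.hne b (Finset.mem_insert.mp hb |>.resolve_left hbα)
    case hcont =>
      intro b i j k hik hkj hi hj
      dsimp only at hi hj ⊢
      by_cases hbα : b = α
      · subst hbα
        rw [hudα] at hi hj ⊢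
        obtain ⟨a0, b0, hsp⟩ := hinv.hint
        rw [hItc] at hsp
        exact contig_from_pair hsp i j k hik hkj hi hj
      · rw [Function.update_of_ne hbα] at hi hj ⊢
        exact hinv.hcont b i j k hik hkj hi hj
    case hint =>
      obtain ⟨a0, b0, hsp⟩ := hinv.hint
      rw [hItc] at hsp
      refine ⟨a0, b0, ?_⟩
      rw [hItc']
      apply Spans_merge hsp
      · intro x hx k
        rw [hproj_other x (by rw [hItc]; simp [hx])]
      · intro x hx k
        rw [hproj_other x (by rw [hItc]; simp [hx])]
      · intro k
        rw [hprojα]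
        exact Iff.rfl
  | bubbleAttach lbl s1 s2 σ hstk hs1 hs2 =>
    have hItc : Items c = σ.reverse ++ s2 :: s1 :: c.buffer := by
      simp [Items, hstk]
    have hItc' :
        Items { c with stack := s2 :: σ, content := Function.update c.content s2 (c.content s2 ∪ c.proj s1), arcs := insert (s2, lbl, s1) c.arcs } = σ.reverse ++ s2 :: c.buffer := by
      simp [Items]
    have hnd := hinv.hnodup
    rw [hItc] at hnd
    obtain ⟨huv, hprene, hpostne⟩ := nodup_facts hnd
    have hs1m : s1 ∈ Items c := by rw [hItc]; simp
    have hs2m : s2 ∈ Items c := by rw [hItc]; simp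
    have hs10 : s1 ≠ 0 := hinv.head_ne hstk
    have hs20 : s2 ≠ 0 := fun h => hinv.hO0 (h ▸ hs2)
    have hOc : c.content s2 = projOf c.arcs c.content s2 :=
      Set.Subset.antisymm self_subset_projOf (hinv.hOproj s2 hs2)
    have hts : ¬ ReflTransGen (ArcRel c.arcs) s1 s2 :=
      hinv.not_reach hs1m hs2m (Ne.symm huv)
    have hcp : c.proj s1 = projOf c.arcs c.content s1 := rfl
    have hupd : Function.update c.content s2 (c.content s2 ∪ c.proj s1) s2
        = c.content s2 ∪ c.proj s1 := Function.update_self _ _ _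
    have hproj_other : ∀ x, x ∈ Items c → x ≠ s2 →
        projOf (insert (s2, lbl, s1) c.arcs)
            (Function.update c.content s2 (c.content s2 ∪ c.proj s1)) x
          = projOf c.arcs c.content x := by
      intro x hx hxb
      refine proj_insert_other hts (hinv.not_reach hx hs2m hxb) ?_
      intro y hy
      exact Function.update_of_ne (fun h => hxb (hinv.reach_eq hx hs2m (by rw [h] at hy; exact hy))) _ _
    have hproj_s2 : projOf (insert (s2, lbl, s1) c.arcs)
            (Function.update c.content s2 (c.content s2 ∪ c.proj s1)) s2
          = projOf c.arcs c.content s2 ∪ projOf c.arcs c.content s1 := by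
      refine proj_insert_src hts ?_ ?_ ?_ ?_
      · intro x hx
        exact Function.update_of_ne (fun h => hts (by rw [h] at hx; exact hx)) _ _
      · intro x _ hxs
        exact Function.update_of_ne hxs _ _
      · rw [hupd, hOc, hcp]
      · rw [hupd]; exact Set.subset_union_left
    have hset : (c.content s2 ∪ c.proj s1)
        = projOf c.arcs c.content s2 ∪ projOf c.arcs c.content s1 := by
      rw [hOc, hcp]
    constructor
    case hstk =>
      obtain ⟨σ', h⟩ := hinv.hstk
      rw [hstk] at h
      exact stack_pop h hs10
    case hnodup =>
      rw [hItc']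
      have hsl : (σ.reverse ++ s2 :: c.buffer).Sublist
          (σ.reverse ++ s2 :: s1 :: c.buffer) :=
        List.Sublist.append_left ((List.sublist_cons_self _ _).cons_cons _) _
      exact hsl.nodup (hItc ▸ hinv.hnodup)
    case hsub =>
      intro x hx
      rw [hItc'] at hx
      apply hinv.hsub
      rw [hItc]
      rcases List.mem_append.mp hx with h | h
      · exact List.mem_append.mpr (Or.inl h)
      · rcases List.mem_cons.mp h with rfl | h
        · exact List.mem_append.mpr (Or.inr (List.mem_cons_self))
        · exact List.mem_append.mpr
            (Or.inr (List.mem_cons_of_mem _ (List.mem_cons_of_mem _ h)))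
    case hc0 =>
      show Function.update c.content s2 (c.content s2 ∪ c.proj s1) 0 = _
      rw [Function.update_of_ne (Ne.symm hs20)]
      exact hinv.hc0
    case hnone =>
      intro b hb
      dsimp only at hb
      by_cases hbs : b = s2
      · subst hbs
        rw [hupd, hset] at hb
        rcases hb with hb | hb
        · exact absurd hb (hinv.none_notin_proj hs2m hs20)
        · exact absurd hb (hinv.none_notin_proj hs1m hs10)
      · rw [Function.update_of_ne hbs] at hb
        exact hinv.hnone b hb
    case hno0 =>
      intro p lb h
      rcases Set.mem_insert_iff.mp h with heq | hmem
      · obtain ⟨_, _, h3⟩ : p = s2 ∧ lb = lbl ∧ (0 : ℕ) = s1 := by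
          simpa [Prod.ext_iff] using heq
        exact hs10 h3.symm
      · exact hinv.hno0 p lb hmem
    case harc =>
      intro p lb q h
      rcases Set.mem_insert_iff.mp h with heq | hmem
      · obtain ⟨rfl, _, rfl⟩ : p = s2 ∧ lb = lbl ∧ q = s1 := by
          simpa [Prod.ext_iff] using heq
        exact ⟨hinv.hsub _ hs2m, hinv.hsub _ hs1m⟩
      · exact hinv.harc p lb q hmem
    case hOstk =>
      intro a ha
      have h := hinv.hOstk a ha
      rw [hstk] at h
      rcases List.mem_cons.mp h with rfl | h
      · exact absurd ha hs1
      · exact h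
    case hO0 => exact hinv.hO0
    case hOproj =>
      intro a ha
      by_cases has2 : a = s2
      · subst has2
        show projOf _ _ a ⊆ Function.update c.content a (c.content a ∪ c.proj s1) a
        rw [hupd, hproj_s2, hset]
      · have ham : a ∈ Items c := mem_stack_items (hinv.hOstk a ha)
        show projOf _ _ a ⊆ Function.update c.content s2 (c.content s2 ∪ c.proj s1) a
        rw [hproj_other a ham has2, Function.update_of_ne has2]
        exact hinv.hOproj a ha
    case hne =>
      intro b hb
      dsimp only at hb ⊢
      by_cases hbs : b = s2
      · subst hbs
        rw [hupd]
        exact (hinv.hne _ (hinv.hsub _ hs2m)).mono Set.subset_union_left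
      · rw [Function.update_of_ne hbs]
        exact hinv.hne b hb
    case hcont =>
      intro b i j k hik hkj hi hj
      dsimp only at hi hj ⊢
      by_cases hbs : b = s2
      · subst hbs
        rw [hupd, hset] at hi hj ⊢
        obtain ⟨a0, b0, hsp⟩ := hinv.hint
        rw [hItc] at hsp
        exact contig_from_pair hsp i j k hik hkj hi hj
      · rw [Function.update_of_ne hbs] at hi hj ⊢
        exact hinv.hcont b i j k hik hkj hi hj
    case hint =>
      obtain ⟨a0, b0, hsp⟩ := hinv.hint
      rw [hItc] at hsp
      refine ⟨a0, b0, ?_⟩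
      rw [hItc']
      apply Spans_merge hsp
      · intro x hx k
        rw [hproj_other x (by rw [hItc]; simp [hx]) (hprene x hx).1]
      · intro x hx k
        rw [hproj_other x (by rw [hItc]; simp [hx]) (hpostne x hx).1]
      · intro k
        rw [hproj_s2]
        exact Iff.rfl

end CCAux


/-- **(Continuous-coverage invariant)** In every reachable configuration, every
bubble's content is a contiguous set of words. -/
theorem continuousCoverage_invariant (n : ℕ) (L : Type*) [Fintype L] (conj : L)
    (c : Config n L) (hreach : Reachable conj c) :
    ∀ α ∈ c.bubbles, ∀ i j k : Fin n, i < k → k < j →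
      some i ∈ c.content α → some j ∈ c.content α → some k ∈ c.content α := by
  
  have hinv : CCAux.Inv c := by
    induction hreach with
    | refl => exact CCAux.inv_init
    | tail _ hstep ih => exact CCAux.inv_step ih hstep
  exact fun α _ i j k hik hkj hi hj => hinv.hcont α i j k hik hkj hi hj
end
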